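/- arXiv:2504.20377 — 12 statements merged into one kernel-verified Lean document; each statement's English description precedes it below -/
import Mathlib

section
/- Let C = (C_0, C_1, ..., C_k) be a tuple of real n×n matrices. Then C has the column W-property if and only if for all nonnegative diagonal n×n matrices D_0, D_1, ..., D_k such that every diagonal entry of D_0 + D_1 + ... + D_k is positive, det(C_0 D_0 + C_1 D_1 + ... + C_k D_k) ≠ 0. -/
open Matrix Finset

/-- `R` is a column representative matrix of the tuple `C = (C 0, ..., C k)`:
each column of `R` is the corresponding column of some `C i`. -/
def IsColRep {n k : ℕ} (C : Fin (k+1) → Matrix (Fin n) (Fin n) ℝ)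
    (R : Matrix (Fin n) (Fin n) ℝ) : Prop :=
  ∀ j : Fin n, ∃ i : Fin (k+1), ∀ r : Fin n, R r j = C i r j

/-- The column `W`-property: all column representative matrices have determinants
that are all positive or all negative. -/
def HasColumnW {n k : ℕ} (C : Fin (k+1) → Matrix (Fin n) (Fin n) ℝ) : Prop :=
  (∀ R, IsColRep C R → 0 < R.det) ∨ (∀ R, IsColRep C R → R.det < 0)

/-- The column `W₀`-property: determinants of all column representative matrices are
all nonnegative with at least one positive, or all nonpositive with at least one negative. -/
def HasColumnW0 {n k : ℕ} (C : Fin (k+1) → Matrix (Fin n) (Fin n) ℝ) : Prop :=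
  ((∀ R, IsColRep C R → 0 ≤ R.det) ∧ (∃ R, IsColRep C R ∧ 0 < R.det)) ∨
  ((∀ R, IsColRep C R → R.det ≤ 0) ∧ (∃ R, IsColRep C R ∧ R.det < 0))

/-- The column nondegenerate-`W` (column ND-`W`) property. -/
def HasColumnNDW {n k : ℕ} (C : Fin (k+1) → Matrix (Fin n) (Fin n) ℝ) : Prop :=
  ∀ x : Fin (k+1) → Fin n → ℝ,
    C 0 *ᵥ x 0 = ∑ i : Fin k, C i.succ *ᵥ x i.succ →
    (∀ i j : Fin (k+1), i < j → x i * x j = 0) →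
    ∀ i, x i = 0

/-- The column sufficient-`W` (cS-`W`) property. -/
def HasCSW {n k : ℕ} (C : Fin (k+1) → Matrix (Fin n) (Fin n) ℝ) : Prop :=
  ∀ x : Fin (k+1) → Fin n → ℝ,
    C 0 *ᵥ x 0 = ∑ i : Fin k, C i.succ *ᵥ x i.succ →
    (∀ i : Fin k, x 0 * x i.succ ≤ 0) →
    (∀ i j : Fin k, i < j → 0 ≤ x i.succ * x j.succ) →
    ∀ i : Fin k, x i.castSucc * x i.succ = 0

/-- The cone column sufficient-`W` (cone cS-`W`) property. -/
def HasConeCSW {n k : ℕ} (C : Fin (k+1) → Matrix (Fin n) (Fin n) ℝ) : Prop :=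
  ∀ x : Fin (k+1) → Fin n → ℝ,
    C 0 *ᵥ x 0 = ∑ i : Fin k, C i.succ *ᵥ x i.succ →
    (∀ i : Fin k, 0 ≤ x i.succ) →
    (∀ i : Fin k, x 0 * x i.succ ≤ 0) →
    ∀ i : Fin k, x i.castSucc * x i.succ = 0

/-- `x = (x 0, ..., x k)` solves the extended horizontal linear complementarity
problem EHLCP(C, d, q). -/
def IsSolEHLCP {n k : ℕ} (C : Fin (k+1) → Matrix (Fin n) (Fin n) ℝ)
    (d : Fin (k-1) → Fin n → ℝ) (q : Fin n → ℝ)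
    (x : Fin (k+1) → Fin n → ℝ) : Prop :=
  C 0 *ᵥ x 0 = q + ∑ i : Fin k, C i.succ *ᵥ x i.succ ∧
  x 0 ⊓ x 1 = 0 ∧
  ∀ j : Fin (k-1),
    (d j - x ⟨j.1 + 1, by have := j.2; omega⟩) ⊓ x ⟨j.1 + 2, by have := j.2; omega⟩ = 0

noncomputable def Rmat {n k : ℕ} (C : Fin (k+1) → Matrix (Fin n) (Fin n) ℝ)
    (α : Fin n → Fin (k+1)) : Matrix (Fin n) (Fin n) ℝ :=
  Matrix.of fun r j => C (α j) r j

lemma isColRep_Rmat {n k : ℕ} (C : Fin (k+1) → Matrix (Fin n) (Fin n) ℝ)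
    (α : Fin n → Fin (k+1)) : IsColRep C (Rmat C α) :=
  fun j => ⟨α j, fun _ => rfl⟩

lemma det_expand {n k : ℕ} (C : Fin (k+1) → Matrix (Fin n) (Fin n) ℝ)
    (D : Fin (k+1) → Fin n → ℝ) :
    (∑ i, C i * Matrix.diagonal (D i)).det
      = ∑ α : Fin n → Fin (k+1), (∏ j, D (α j) j) * (Rmat C α).det := by
  rw [← Matrix.det_transpose]
  have h : (∑ i, C i * Matrix.diagonal (D i))ᵀ
      = Matrix.of fun j => ∑ i, D i j • (fun r => C i r j) := by
    ext j r
    simp [Matrix.sum_apply, Matrix.mul_apply, Matrix.diagonal, mul_comm,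
      Finset.sum_apply]
  rw [h]
  have := (Matrix.detRowAlternating (R := ℝ) (n := Fin n)).toMultilinearMap.map_sum
    (g := fun j (i : Fin (k+1)) => D i j • (fun r => C i r j))
  rw [show ((Matrix.of fun j => ∑ i, D i j • (fun r : Fin n => C i r j)).det)
      = Matrix.detRowAlternating (fun j => ∑ i, D i j • (fun r : Fin n => C i r j)) from rfl]
  erw [this]
  refine Finset.sum_congr rfl fun α _ => ?_
  rw [(Matrix.detRowAlternating (R := ℝ) (n := Fin n)).toMultilinearMap.map_smul_univ
    (fun j => D (α j) j) (fun j => fun r => C (α j) r j)]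
  rw [smul_eq_mul]
  congr 1
  rw [← Matrix.det_transpose (Rmat C α)]
  rfl


lemma sum_pos_aux {n k : ℕ} (D : Fin (k+1) → Fin n → ℝ) (e : (Fin n → Fin (k+1)) → ℝ)
    (hD : ∀ i, 0 ≤ D i) (hDs : ∀ r, 0 < ∑ i, D i r) (he : ∀ α, 0 < e α) :
    0 < ∑ α : Fin n → Fin (k+1), (∏ j, D (α j) j) * e α := by
  have hex : ∀ r, ∃ i, 0 < D i r := by
    intro r
    by_contra h
    push_neg at h
    have h0 : ∀ i, D i r = 0 := fun i => le_antisymm (h i) (hD i r)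
    have := hDs r
    simp [h0] at this
  choose α hα using hex
  apply Finset.sum_pos'
  · intro β _
    exact mul_nonneg (Finset.prod_nonneg fun j _ => hD _ j) (he β).le
  · exact ⟨α, Finset.mem_univ _, mul_pos (Finset.prod_pos fun j _ => hα j) (he _)⟩

lemma colRep_eq_Rmat {n k : ℕ} {C : Fin (k+1) → Matrix (Fin n) (Fin n) ℝ}
    {R : Matrix (Fin n) (Fin n) ℝ} (hR : IsColRep C R) :
    ∃ α, R = Rmat C α := by
  choose α hα using hR
  exact ⟨α, by ext r j; exact hα j r⟩

/-- the 0/1 diagonal choice matrices -/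
def Dof {n k : ℕ} (α : Fin n → Fin (k+1)) : Fin (k+1) → Fin n → ℝ :=
  fun i r => if α r = i then 1 else 0

lemma Dof_nonneg {n k : ℕ} (α : Fin n → Fin (k+1)) : ∀ i, 0 ≤ Dof α i := by
  intro i r
  unfold Dof
  positivity

lemma Dof_sum_pos {n k : ℕ} (α : Fin n → Fin (k+1)) : ∀ r, 0 < ∑ i, Dof α i r := by
  intro r
  simp [Dof]

lemma det_Dof {n k : ℕ} (C : Fin (k+1) → Matrix (Fin n) (Fin n) ℝ)
    (α : Fin n → Fin (k+1)) :
    (∑ i, C i * Matrix.diagonal (Dof α i)).det = (Rmat C α).det := by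
  congr 1
  ext r j
  simp [Matrix.sum_apply, Matrix.mul_diagonal, Dof, Rmat, Matrix.mul_apply, Matrix.diagonal,
    mul_ite]

lemma same_sign_aux {n k : ℕ} (C : Fin (k+1) → Matrix (Fin n) (Fin n) ℝ)
    (hdet : ∀ D : Fin (k+1) → Fin n → ℝ, (∀ i, 0 ≤ D i) → (∀ r, 0 < ∑ i, D i r) →
      (∑ i, C i * Matrix.diagonal (D i)).det ≠ 0)
    (D D' : Fin (k+1) → Fin n → ℝ)
    (hD : ∀ i, 0 ≤ D i) (hDs : ∀ r, 0 < ∑ i, D i r)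
    (hD' : ∀ i, 0 ≤ D' i) (hDs' : ∀ r, 0 < ∑ i, D' i r)
    (h1 : (∑ i, C i * Matrix.diagonal (D i)).det < 0)
    (h2 : 0 < (∑ i, C i * Matrix.diagonal (D' i)).det) : False := by
  set g : ℝ → ℝ := fun t =>
    (∑ i, C i * Matrix.diagonal (fun r => (1 - t) * D i r + t * D' i r)).det with hg
  have hcont : Continuous g := by
    apply Continuous.matrix_det
    apply continuous_finset_sum
    intro i _
    exact continuous_const.matrix_mul
      (Continuous.matrix_diagonal (by fun_prop))
  have hg0 : g 0 = (∑ i, C i * Matrix.diagonal (D i)).det := by simp [hg]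
  have hg1 : g 1 = (∑ i, C i * Matrix.diagonal (D' i)).det := by simp [hg]
  have hIcc := intermediate_value_Icc (by norm_num : (0:ℝ) ≤ 1) hcont.continuousOn
  have h0mem : (0:ℝ) ∈ Set.Icc (g 0) (g 1) := by
    rw [hg0, hg1]; exact ⟨h1.le, h2.le⟩
  obtain ⟨t, ht, hgt⟩ := hIcc h0mem
  obtain ⟨ht0, ht1⟩ := ht
  refine hdet (fun i r => (1 - t) * D i r + t * D' i r) ?_ ?_ (by simpa [hg] using hgt)
  · intro i r
    have hDa := hD i r
    have hDb := hD' i r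
    simp only [Pi.zero_apply] at hDa hDb ⊢
    nlinarith
  · intro r
    have hsum : ∑ i, ((1 - t) * D i r + t * D' i r)
        = (1 - t) * ∑ i, D i r + t * ∑ i, D' i r := by
      rw [Finset.mul_sum, Finset.mul_sum, ← Finset.sum_add_distrib]
    rw [hsum]
    rcases eq_or_lt_of_le ht0 with h | h
    · rw [← h]; simpa using hDs r
    · exact add_pos_of_nonneg_of_pos
        (mul_nonneg (by linarith) (hDs r).le) (mul_pos h (hDs' r))


/-- `C` has the column `W`-property iff for all nonnegative diagonal
matrices `D_0, ..., D_k` whose sum has positive diagonal,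
`det(C_0 D_0 + ⋯ + C_k D_k) ≠ 0`. -/
theorem columnW_iff_det_ne_zero {n k : ℕ} (C : Fin (k+1) → Matrix (Fin n) (Fin n) ℝ) :
    HasColumnW C ↔
      ∀ D : Fin (k+1) → Fin n → ℝ, (∀ i, 0 ≤ D i) → (∀ r : Fin n, 0 < ∑ i, D i r) →
        (∑ i, C i * Matrix.diagonal (D i)).det ≠ 0 := by
  constructor
  · rintro (hpos | hneg) D hD hDs
    · rw [det_expand]
      exact (sum_pos_aux D _ hD hDs fun α => hpos _ (isColRep_Rmat C α)).ne'
    · rw [det_expand]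
      intro h
      have : 0 < ∑ α : Fin n → Fin (k+1), (∏ j, D (α j) j) * (-(Rmat C α).det) := by
        apply sum_pos_aux D _ hD hDs
        intro α
        simpa using hneg _ (isColRep_Rmat C α)
      rw [show (∑ α : Fin n → Fin (k+1), (∏ j, D (α j) j) * (-(Rmat C α).det))
          = -(∑ α : Fin n → Fin (k+1), (∏ j, D (α j) j) * (Rmat C α).det) by
        rw [← Finset.sum_neg_distrib]; exact Finset.sum_congr rfl fun α _ => by ring] at this
      rw [h] at this
      simp at this
  · intro hdet
    have hne : ∀ α : Fin n → Fin (k+1), (Rmat C α).det ≠ 0 := by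
      intro α
      rw [← det_Dof]
      exact hdet _ (Dof_nonneg α) (Dof_sum_pos α)
    rcases (hne fun _ => 0).lt_or_gt with h0 | h0
    · right
      intro R hR
      obtain ⟨α, rfl⟩ := colRep_eq_Rmat hR
      rcases (hne α).lt_or_gt with h | h
      · exact h
      · exfalso
        refine same_sign_aux C hdet (Dof (fun _ => 0)) (Dof α)
          (Dof_nonneg _) (Dof_sum_pos _) (Dof_nonneg _) (Dof_sum_pos _) ?_ ?_
        · rwa [det_Dof]
        · rwa [det_Dof]
    · left
      intro R hR
      obtain ⟨α, rfl⟩ := colRep_eq_Rmat hR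
      rcases (hne α).lt_or_gt with h | h
      · exfalso
        refine same_sign_aux C hdet (Dof α) (Dof (fun _ => 0))
          (Dof_nonneg _) (Dof_sum_pos _) (Dof_nonneg _) (Dof_sum_pos _) ?_ ?_
        · rwa [det_Dof]
        · rwa [det_Dof]
      · exact h
end

section
/- Let C = (C_0, C_1, ..., C_k) be a tuple of real n×n matrices. Then C has the column ND-W property if and only if for every q ∈ ℝ^n and every tuple d = (d_1, ..., d_{k-1}) of positive vectors in ℝ^n, the solution set SOL(C, d, q) of EHLCP(C, d, q) is finite. -/
open Matrix Finset

namespace NDWAux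

variable {n k : ℕ}

lemma inf_zero_intro {a b : ℝ} (ha : 0 ≤ a) (hb : 0 ≤ b) (h : a = 0 ∨ b = 0) :
    a ⊓ b = 0 := by
  rcases h with h | h
  · rw [h]; exact inf_eq_left.mpr hb
  · rw [h]; exact inf_eq_right.mpr ha

lemma inf_zero_elim {a b : ℝ} (h : a ⊓ b = 0) :
    0 ≤ a ∧ 0 ≤ b ∧ (a = 0 ∨ b = 0) := by
  refine ⟨h ▸ inf_le_left, h ▸ inf_le_right, ?_⟩
  rcases le_total a b with h' | h'
  · left; rw [← h, inf_eq_left.mpr h']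
  · right; rw [← h, inf_eq_right.mpr h']

lemma fin_one (hk : 0 < k) : (⟨1, by omega⟩ : Fin (k+1)) = 1 := by
  apply Fin.ext
  rw [Fin.val_one', Nat.mod_eq_of_lt (by omega)]

def XX (x : Fin (k+1) → Fin n → ℝ) (r : Fin n) (m : ℕ) : ℝ :=
  if h : m < k + 1 then x ⟨m, h⟩ r else 0

def DD (d : Fin (k-1) → Fin n → ℝ) (r : Fin n) (j : ℕ) : ℝ :=
  if h : j < k - 1 then d ⟨j, h⟩ r else 1

def Pat (x : Fin (k+1) → Fin n → ℝ) (d : Fin (k-1) → Fin n → ℝ) (r : Fin n) (i : ℕ) : Prop :=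
  i ≤ k ∧ (1 ≤ i → XX x r 0 = 0) ∧
  (∀ m, 1 ≤ m → m < i → XX x r m = DD d r (m-1)) ∧
  (∀ m, i < m → XX x r m = 0)

variable {x : Fin (k+1) → Fin n → ℝ} {d : Fin (k-1) → Fin n → ℝ} {r : Fin n}

lemma zprop (hk : 0 < k) (hd : ∀ j r, 0 < d j r)
    (hB : ∀ j : ℕ, j + 2 ≤ k → (DD d r j - XX x r (j+1)) ⊓ XX x r (j+2) = 0)
    {m : ℕ} (hm : 1 ≤ m) (h0 : XX x r m = 0) :
    ∀ m', m ≤ m' → XX x r m' = 0 := by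
  intro m' hmm'
  obtain ⟨l, rfl⟩ := Nat.exists_eq_add_of_le hmm'
  clear hmm'
  induction l with
  | zero => simpa using h0
  | succ l ih =>
    by_cases hle : m + l + 1 ≤ k
    · have hB' := hB (m + l - 1) (by omega)
      have h1 : m + l - 1 + 1 = m + l := by omega
      have h2 : m + l - 1 + 2 = m + l + 1 := by omega
      rw [h1, h2] at hB'
      have hd' : 0 < DD d r (m + l - 1) := by
        rw [DD, dif_pos (by omega)]; exact hd _ _
      have hihl : XX x r (m + l) = 0 := ih
      rw [hihl, sub_zero] at hB'
      obtain ⟨_, _, h | h⟩ := inf_zero_elim hB'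
      · exact absurd h (ne_of_gt hd')
      · exact h
    · rw [XX, dif_neg (by omega)]

lemma exists_pat (hk : 0 < k) (hd : ∀ j r, 0 < d j r)
    (hA : XX x r 0 ⊓ XX x r 1 = 0)
    (hB : ∀ j : ℕ, j + 2 ≤ k → (DD d r j - XX x r (j+1)) ⊓ XX x r (j+2) = 0) :
    ∃ i, Pat x d r i := by
  classical
  by_cases h0 : XX x r 0 = 0
  · set Q : ℕ → Prop := fun i => 1 ≤ i ∧ ∀ m, 1 ≤ m → m < i → XX x r m = DD d r (m-1) with hQ
    have hQ1 : Q 1 := ⟨le_refl 1, by intro m h1 h2; omega⟩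
    set i := Nat.findGreatest Q k with hi
    have hik : i ≤ k := Nat.findGreatest_le k
    have hQi : Q i := Nat.findGreatest_spec hk hQ1
    refine ⟨i, hik, fun _ => h0, fun m h1 h2 => hQi.2 m h1 h2, ?_⟩
    by_cases hieq : i = k
    · intro m hm
      rw [XX, dif_neg (by omega)]
    · have hnQ : ¬ Q (i + 1) :=
        Nat.findGreatest_is_greatest (Nat.lt_succ_self i) (by omega)
      have hxi : XX x r i ≠ DD d r (i-1) := by
        intro hcon
        apply hnQ
        refine ⟨by omega, fun m h1 h2 => ?_⟩
        rcases Nat.lt_or_ge m i with h | h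
        · exact hQi.2 m h1 h
        · have : m = i := by omega
          subst this; exact hcon
      have hB' := hB (i - 1) (by omega)
      have e1 : i - 1 + 1 = i := by omega
      have e2 : i - 1 + 2 = i + 1 := by omega
      rw [e1, e2] at hB'
      obtain ⟨hge, _, hor⟩ := inf_zero_elim hB'
      have hx1 : XX x r (i+1) = 0 := by
        rcases hor with h | h
        · exact absurd (by linarith [sub_eq_zero.mp h]) hxi
        · exact h
      intro m hm
      exact zprop hk hd hB (by omega) hx1 m (by omega)
  · obtain ⟨ha, hb, hor⟩ := inf_zero_elim hA
    have hx1 : XX x r 1 = 0 := by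
      rcases hor with h | h
      · exact absurd h h0
      · exact h
    refine ⟨0, by omega, by omega, by omega, ?_⟩
    intro m hm
    exact zprop hk hd hB le_rfl hx1 m (by omega)

lemma pat_unique {y : Fin (k+1) → Fin n → ℝ} {i : ℕ}
    (hx : Pat x d r i) (hy : Pat y d r i) {m : ℕ} (hmi : m ≠ i) :
    XX x r m = XX y r m := by
  rcases Nat.lt_or_ge m i with h | h
  · rcases Nat.eq_zero_or_pos m with rfl | hm
    · rw [hx.2.1 (by omega), hy.2.1 (by omega)]
    · rw [hx.2.2.1 m hm h, hy.2.2.1 m hm h]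
  · have h' : i < m := by omega
    rw [hx.2.2.2 m h', hy.2.2.2 m h']

lemma sol_pat {C : Fin (k+1) → Matrix (Fin n) (Fin n) ℝ} {q : Fin n → ℝ}
    (hk : 0 < k) (hd : ∀ j r, 0 < d j r)
    (hx : IsSolEHLCP C d q x) (r : Fin n) : ∃ i, Pat x d r i := by
  apply exists_pat hk hd
  · have h := congrFun hx.2.1 r
    have e0 : XX x r 0 = x 0 r := by rw [XX, dif_pos (by omega)]; rfl
    have e1 : XX x r 1 = x 1 r := by
      rw [XX, dif_pos (by omega), fin_one hk]
    rw [e0, e1]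
    simpa [Pi.inf_apply] using h
  · intro j hj
    have h := congrFun (hx.2.2 ⟨j, by omega⟩) r
    have eD : DD d r j = d ⟨j, by omega⟩ r := by rw [DD, dif_pos (by omega)]
    have e1 : XX x r (j+1) = x ⟨j+1, by omega⟩ r := by rw [XX, dif_pos (by omega)]
    have e2 : XX x r (j+2) = x ⟨j+2, by omega⟩ r := by rw [XX, dif_pos (by omega)]
    rw [eD, e1, e2]
    simpa [Pi.inf_apply, Pi.sub_apply] using h

open Classical in
noncomputable def zstar (x : Fin (k+1) → Fin n → ℝ) (B : ℝ) : Fin (k+1) → Fin n → ℝ :=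
  fun i r =>
    if i.1 = 0 then max (-(x 0 r)) 0
    else if ∃ m, i < m ∧ x m r ≠ 0 then B else max (-(x i r)) 0

end NDWAux

open NDWAux

/-- `C` has the column ND-`W` property iff for every `q` and every tuple of
positive vectors `d`, the solution set of EHLCP(C, d, q) is finite. -/
theorem columnNDW_iff_finite_solutions {n k : ℕ} (hk : 0 < k)
    (C : Fin (k+1) → Matrix (Fin n) (Fin n) ℝ) :
    HasColumnNDW C ↔
      ∀ (q : Fin n → ℝ) (d : Fin (k-1) → Fin n → ℝ), (∀ j, ∀ r, 0 < d j r) →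
        {x : Fin (k+1) → Fin n → ℝ | IsSolEHLCP C d q x}.Finite := by
  constructor
  · -- ND-W implies finiteness
    intro hndw q d hd
    classical
    set S := {x : Fin (k+1) → Fin n → ℝ | IsSolEHLCP C d q x} with hS
    have hmem : ∀ s : ↥S, IsSolEHLCP C d q s.1 := fun s => s.2
    choose pat hpat using fun (s : ↥S) (r : Fin n) => sol_pat hk hd (hmem s) r
    have hFinj : Function.Injective
        (fun s : ↥S => fun r : Fin n =>
          (⟨pat s r, by have := (hpat s r).1; omega⟩ : Fin (k+1))) := by
      intro a b hab
      have hpv : ∀ r, pat a r = pat b r := by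
        intro r
        have h := congrFun hab r
        simpa using congrArg Fin.val h
      set z : Fin (k+1) → Fin n → ℝ := fun i => a.1 i - b.1 i with hz
      have heq : C 0 *ᵥ z 0 = ∑ i : Fin k, C i.succ *ᵥ z i.succ := by
        have ha := (hmem a).1
        have hb := (hmem b).1
        simp only [hz, Matrix.mulVec_sub, ha, hb, Finset.sum_sub_distrib]
        abel
      have horth : ∀ i j : Fin (k+1), i < j → z i * z j = 0 := by
        intro i j hij
        funext r
        have hkey : ∀ m : Fin (k+1), m.1 ≠ pat a r → z m r = 0 := by
          intro m hm
          have h1 : XX a.1 r m.1 = XX b.1 r m.1 := by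
            apply pat_unique (hpat a r) _ hm
            rw [hpv r]; exact hpat b r
          have e : ∀ (w : Fin (k+1) → Fin n → ℝ), XX w r m.1 = w m r := by
            intro w; rw [XX, dif_pos m.2]
          rw [e, e] at h1
          simp [hz, h1]
        by_cases hi : i.1 = pat a r
        · have hj : j.1 ≠ pat a r := by
            intro h
            exact absurd (Fin.ext (hi.trans h.symm) : i = j) (ne_of_lt hij)
          simp [Pi.mul_apply, hkey j hj]
        · simp [Pi.mul_apply, hkey i hi]
      have hzero := hndw z heq horth
      apply Subtype.ext
      funext i r
      have h := congrFun (hzero i) r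
      have h' : a.1 i r - b.1 i r = 0 := h
      linarith
    have : Finite ↥S := Finite.of_injective _ hFinj
    exact Set.toFinite S
  · -- finiteness implies ND-W
    intro hfin x hEq hOrth
    by_contra hcon
    push_neg at hcon
    obtain ⟨i0, hi0⟩ := hcon
    obtain ⟨r0, hr0⟩ := Function.ne_iff.mp hi0
    rw [Pi.zero_apply] at hr0
    classical
    set B : ℝ := 1 + ∑ i : Fin (k+1), ∑ r : Fin n, |x i r| with hB
    have hsum_nonneg : (0:ℝ) ≤ ∑ i : Fin (k+1), ∑ r : Fin n, |x i r| :=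
      Finset.sum_nonneg fun i _ => Finset.sum_nonneg fun r _ => abs_nonneg _
    have hBpos : 0 < B := by rw [hB]; linarith
    have hBbig : ∀ i r, |x i r| < B := by
      intro i r
      have h1 : |x i r| ≤ ∑ r' : Fin n, |x i r'| :=
        Finset.single_le_sum (f := fun r' => |x i r'|)
          (fun r' _ => abs_nonneg _) (Finset.mem_univ r)
      have h2 : (∑ r' : Fin n, |x i r'|) ≤ ∑ i' : Fin (k+1), ∑ r' : Fin n, |x i' r'| :=
        Finset.single_le_sum (f := fun i' => ∑ r' : Fin n, |x i' r'|)
          (fun i' _ => Finset.sum_nonneg fun r' _ => abs_nonneg _) (Finset.mem_univ i)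
      rw [hB]; linarith
    have disj : ∀ (i j : Fin (k+1)) (r : Fin n), i < j → x j r ≠ 0 → x i r = 0 := by
      intro i j r hij hj
      have h := congrFun (hOrth i j hij) r
      rcases mul_eq_zero.mp h with h | h
      · exact h
      · exact absurd h hj
    set zs : Fin (k+1) → Fin n → ℝ := zstar x B with hzs
    have hz0 : ∀ r, zs 0 r = max (-(x 0 r)) 0 := by
      intro r
      rw [hzs]
      simp only [zstar]
      rw [if_pos (Fin.val_zero (k+1) : ((0 : Fin (k+1)) : ℕ) = 0)]
    have hzex : ∀ (i : Fin (k+1)) (r : Fin n), i.1 ≠ 0 → (∃ m, i < m ∧ x m r ≠ 0) →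
        zs i r = B := by
      intro i r h0 hex
      rw [hzs]; simp only [zstar]; rw [if_neg h0, if_pos hex]
    have hznex : ∀ (i : Fin (k+1)) (r : Fin n), i.1 ≠ 0 → ¬(∃ m, i < m ∧ x m r ≠ 0) →
        zs i r = max (-(x i r)) 0 := by
      intro i r h0 hex
      rw [hzs]; simp only [zstar]; rw [if_neg h0, if_neg hex]
    have hzd : ∀ (i : Fin (k+1)) (r : Fin n),
        (zs i r = B ∧ x i r = 0) ∨ zs i r = max (-(x i r)) 0 := by
      intro i r
      by_cases h0 : i.1 = 0
      · right
        have h00 : i = 0 := Fin.ext (by simpa using h0)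
        subst h00
        exact hz0 r
      · by_cases hex : ∃ m, i < m ∧ x m r ≠ 0
        · left
          obtain ⟨m, him, hm⟩ := hex
          exact ⟨hzex i r h0 ⟨m, him, hm⟩, disj i m r him hm⟩
        · right
          exact hznex i r h0 hex
    set sol : ℝ → Fin (k+1) → Fin n → ℝ := fun t i => zs i + t • x i with hsol
    have hval : ∀ t i r, sol t i r = zs i r + t * x i r := by
      intro t i r; rw [hsol]; simp
    have hnn : ∀ t, t ∈ Set.Icc (0:ℝ) 1 → ∀ i r, 0 ≤ sol t i r ∧ sol t i r ≤ B := by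
      rintro t ⟨ht0, ht1⟩ i r
      rw [hval]
      rcases hzd i r with ⟨h1, h2⟩ | h
      · rw [h1, h2]; constructor <;> nlinarith
      · rw [h]
        have hbb := hBbig i r
        rcases le_or_gt 0 (x i r) with ha | ha
        · rw [max_eq_right (by linarith)]
          rw [abs_of_nonneg ha] at hbb
          constructor <;> nlinarith
        · rw [max_eq_left (by linarith)]
          rw [abs_of_neg ha] at hbb
          constructor <;> nlinarith
    set d : Fin (k-1) → Fin n → ℝ := fun _ _ => B with hd
    set q : Fin n → ℝ := C 0 *ᵥ zs 0 - ∑ i : Fin k, C i.succ *ᵥ zs i.succ with hq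
    have hsolmem : ∀ t, t ∈ Set.Icc (0:ℝ) 1 → IsSolEHLCP C d q (sol t) := by
      intro t ht
      have key : ∀ i1 i2 : Fin (k+1), i1.1 ≠ 0 → i1 < i2 → ∀ r : Fin n,
          (B - sol t i1 r) ⊓ sol t i2 r = 0 := by
        intro i1 i2 h10 h12 r
        refine inf_zero_intro (by linarith [(hnn t ht i1 r).2]) ((hnn t ht i2 r).1) ?_
        by_cases hex : ∃ m, i1 < m ∧ x m r ≠ 0
        · left
          have hxi1 : x i1 r = 0 := by
            obtain ⟨m, hm, hne⟩ := hex; exact disj i1 m r hm hne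
          rw [hval, hzex i1 r h10 hex, hxi1]; ring
        · right
          have hxi2 : x i2 r = 0 := by
            by_contra hne; exact hex ⟨i2, h12, hne⟩
          have hnex2 : ¬ ∃ m, i2 < m ∧ x m r ≠ 0 := by
            rintro ⟨m, hm, hne⟩; exact hex ⟨m, lt_trans h12 hm, hne⟩
          have hlt12 := Fin.lt_def.mp h12
          have h20 : i2.1 ≠ 0 := by omega
          rw [hval, hznex i2 r h20 hnex2, hxi2]; simp
      refine ⟨?_, ?_, ?_⟩
      · -- the linear equation
        simp only [hsol, Matrix.mulVec_add, Matrix.mulVec_smul, hEq,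
          Finset.sum_add_distrib, ← Finset.smul_sum, hq]
        abel
      · funext r
        have h0 : 0 ≤ sol t 0 r := (hnn t ht 0 r).1
        have h1 : 0 ≤ sol t 1 r := (hnn t ht 1 r).1
        have h1v : ((1 : Fin (k+1)) : ℕ) = 1 := by
          rw [Fin.val_one', Nat.mod_eq_of_lt (by omega)]
        refine inf_zero_intro h0 h1 ?_
        by_cases hx0 : x 0 r = 0
        · left; rw [hval, hz0 r, hx0]; simp
        · right
          have hall : ∀ m : Fin (k+1), (0 : Fin (k+1)) < m → x m r = 0 := by
            intro m hm
            by_contra h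
            exact hx0 (disj 0 m r hm h)
          have h01 : (0 : Fin (k+1)) < 1 := by
            rw [Fin.lt_def, h1v, Fin.val_zero]; omega
          have hnex : ¬ ∃ m, (1 : Fin (k+1)) < m ∧ x m r ≠ 0 := by
            rintro ⟨m, hm, hne⟩
            exact hne (hall m (lt_trans h01 hm))
          rw [hval, hznex 1 r (by omega) hnex, hall 1 h01]
          simp
      · intro j
        funext r
        have hlt : (⟨j.1 + 1, by have := j.2; omega⟩ : Fin (k+1)) <
            ⟨j.1 + 2, by have := j.2; omega⟩ := Fin.mk_lt_mk.mpr (by omega)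
        have hkey := key ⟨j.1 + 1, by have := j.2; omega⟩ ⟨j.1 + 2, by have := j.2; omega⟩
          (by simp) hlt r
        simpa [Pi.inf_apply, Pi.sub_apply, hd] using hkey
    have hIcc : (Set.Icc (0:ℝ) 1).Infinite := Set.infinite_coe_iff.mp (Set.Icc.infinite (by norm_num))
    have hinj : Set.InjOn sol (Set.Icc 0 1) := by
      intro t _ s _ hts
      have h := congrFun (congrFun hts i0) r0
      rw [hval, hval] at h
      have h' : t * x i0 r0 = s * x i0 r0 := by linarith
      exact mul_right_cancel₀ hr0 h'
    have himg : (sol '' Set.Icc 0 1).Infinite := hIcc.image hinj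
    have hsubset : sol '' Set.Icc 0 1 ⊆ {x | IsSolEHLCP C d q x} := by
      rintro _ ⟨t, ht, rfl⟩
      exact hsolmem t ht
    exact himg (Set.Finite.subset (hfin q d fun _ _ => hBpos) hsubset)
end

section
/- Let C = (C_0, C_1, ..., C_k) be a tuple of real n×n matrices. If C has the column W-property, then C has the column ND-W property. -/
open Matrix Finset

/-!
Subtracting the right-hand side turns `C₀ x₀ = Σ Cᵢ xᵢ` into `Σᵢ Cᵢ zᵢ = 0` with `z₀ = x₀` and
`zᵢ = -xᵢ`. Complementarity leaves each coordinate `j` with at most one index `σ j` for which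
`z_{σ j} j` can be nonzero, so `Σᵢ Cᵢ zᵢ = R w` for the column representative `R` taking its
`j`-th column from `C_{σ j}` and `w j = z_{σ j} j`. The column `W`-property makes `R` nonsingular,
hence `w = 0`, and therefore every `xᵢ` vanishes.
-/

theorem Matrix.of_mulVec_eq_sum_mulVec {ι m n S : Type*} [Fintype ι] [Fintype n]
    [NonUnitalNonAssocSemiring S] (A : ι → Matrix m n S) (z : ι → n → S) (σ : n → ι)
    (hz : ∀ i j, i ≠ σ j → z i j = 0) :
    (of fun r j => A (σ j) r j) *ᵥ (fun j => z (σ j) j) = ∑ i, A i *ᵥ z i := by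
  ext r
  simp only [mulVec, dotProduct, Finset.sum_apply, of_apply]
  rw [Finset.sum_comm]
  refine Finset.sum_congr rfl fun j _ => ?_
  rw [Finset.sum_eq_single (σ j) (fun i _ hi => by rw [hz i j hi, mul_zero])
    (fun h => absurd (mem_univ _) h)]

theorem exists_selector_of_pairwise_mul_eq_zero {ι n S : Type*} [Nonempty ι] [MulZeroClass S]
    [NoZeroDivisors S] (x : ι → n → S) (hx : Pairwise fun i i' => x i * x i' = 0) :
    ∃ σ : n → ι, ∀ i j, i ≠ σ j → x i j = 0 := by
  have hsel : ∀ j, ∃ i₀, ∀ i, i ≠ i₀ → x i j = 0 := by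
    intro j
    by_cases hj : ∃ i₀, x i₀ j ≠ 0
    · obtain ⟨i₀, hi₀⟩ := hj
      exact ⟨i₀, fun i hi => (mul_eq_zero.1 (congrFun (hx hi) j)).resolve_right hi₀⟩
    · push Not at hj
      exact ⟨Classical.arbitrary ι, fun i _ => hj i⟩
  choose σ hσ using hsel
  exact ⟨σ, fun i j => hσ j i⟩

theorem HasColumnW.det_ne_zero {n k : ℕ} {C : Fin (k+1) → Matrix (Fin n) (Fin n) ℝ}
    (h : HasColumnW C) {R : Matrix (Fin n) (Fin n) ℝ} (hR : IsColRep C R) : R.det ≠ 0 :=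
  h.elim (fun hpos => (hpos R hR).ne') fun hneg => (hneg R hR).ne

/-- the column `W`-property implies the column ND-`W` property. -/
theorem columnW_implies_columnNDW {n k : ℕ} (C : Fin (k+1) → Matrix (Fin n) (Fin n) ℝ)
    (h : HasColumnW C) : HasColumnNDW C := by
  intro x hx hdisj
  have hpair : Pairwise fun i j => x i * x j = 0 := fun i j hij =>
    hij.lt_or_gt.elim (hdisj i j) fun hji => (mul_comm (x i) (x j)).trans (hdisj j i hji)
  obtain ⟨σ, hσ⟩ := exists_selector_of_pairwise_mul_eq_zero x hpair
  set z : Fin (k+1) → Fin n → ℝ := Fin.cons (x 0) fun i => -x i.succ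
  have hz_eq_zero : ∀ i j, z i j = 0 ↔ x i j = 0 :=
    Fin.cases (fun _ => Iff.rfl) fun i j => by simp [z]
  have hz_sum : ∑ i, C i *ᵥ z i = 0 := by
    simp [z, Fin.sum_univ_succ, mulVec_neg, hx]
  have hR : IsColRep C (of fun r j => C (σ j) r j) := fun j => ⟨σ j, fun _ => rfl⟩
  have hw : (fun j => z (σ j) j) = 0 := by
    refine eq_zero_of_mulVec_eq_zero (h.det_ne_zero hR) ?_
    rw [of_mulVec_eq_sum_mulVec C z σ fun i j hi => (hz_eq_zero i j).2 (hσ i j hi), hz_sum]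
  intro i
  ext j
  by_cases hi : i = σ j
  · subst hi
    exact (hz_eq_zero _ j).1 (congrFun hw j)
  · exact hσ i j hi
end

section
/- Let C = (C_0, C_1, ..., C_k) be a tuple of real n×n matrices. If C has the cS-W property, then for every q ∈ ℝ^n and every tuple d = (d_1, ..., d_{k-1}) of positive vectors in ℝ^n, the solution set SOL(C, d, q) of EHLCP(C, d, q) is a convex subset of (ℝ^n)^{k+1}. -/
/-!
Along each coordinate a solution is a staircase: if `x_j > 0` then every earlier `x_i` (`i ≥ 1`)
sits at its cap `d_i` and `x_0 = 0`. Hence each slack `x_0`, `d_i - x_i` is complementary not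
only to its partner `x_{i+1}` but to every later `x_j`. For two solutions `x, y` this gives the
sign hypotheses of cS-W for `x - y`, so `(x_i - y_i) * (x_{i+1} - y_{i+1}) = 0`; that identity
kills the cross terms in the complementarity conditions of a convex combination of `x` and `y`.
-/

open Matrix Finset

theorem min_eq_zero_iff {α : Type*} [LinearOrder α] [MulZeroClass α] [NoZeroDivisors α]
    {a b : α} : min a b = 0 ↔ 0 ≤ a ∧ 0 ≤ b ∧ a * b = 0 := by
  constructor
  · intro h
    rcases le_total a b with hab | hab
    · rw [min_eq_left hab] at h
      exact ⟨h.ge, h ▸ hab, by rw [h, zero_mul]⟩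
    · rw [min_eq_right hab] at h
      exact ⟨h ▸ hab, h.ge, by rw [h, mul_zero]⟩
  · rintro ⟨ha, hb, hab⟩
    rcases mul_eq_zero.mp hab with rfl | rfl
    · exact min_eq_left hb
    · exact min_eq_right ha

section Complementarity

variable {ι R : Type*} [CommRing R] [LinearOrder R] [IsStrictOrderedRing R]
  {u v u' v' w e : ι → R}

theorem Pi.inf_eq_zero_iff : u ⊓ v = 0 ↔ ∀ r, 0 ≤ u r ∧ 0 ≤ v r ∧ u r * v r = 0 := by
  simp only [funext_iff, Pi.inf_apply, Pi.zero_apply, min_eq_zero_iff]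

/-- If `w r > 0` then `v r = e r > 0`, which forces `u r = 0`. -/
theorem inf_eq_zero_of_slack (huv : u ⊓ v = 0) (hw : (e - v) ⊓ w = 0) (he : ∀ r, 0 < e r) :
    u ⊓ w = 0 := by
  rw [Pi.inf_eq_zero_iff] at huv hw ⊢
  intro r
  obtain ⟨hu, -, huv⟩ := huv r
  obtain ⟨-, hw, hvw⟩ := hw r
  have huwe : u r * w r * e r = 0 := by
    simp only [Pi.sub_apply] at hvw
    linear_combination u r * hvw + w r * huv
  exact ⟨hu, hw, (mul_eq_zero.mp huwe).resolve_right (he r).ne'⟩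

theorem sub_mul_sub_nonpos_of_inf_eq_zero (h : u ⊓ v = 0) (h' : u' ⊓ v' = 0) :
    (u - u') * (v - v') ≤ 0 := by
  rw [Pi.inf_eq_zero_iff] at h h'
  intro r
  obtain ⟨hu, hv, huv⟩ := h r
  obtain ⟨hu', hv', huv'⟩ := h' r
  simp only [Pi.mul_apply, Pi.sub_apply, Pi.zero_apply]
  nlinarith [mul_nonneg hu hv', mul_nonneg hu' hv]

/-- Both cross terms `u * v'` and `u' * v` are nonnegative and, by `hcross`, sum to zero. -/
theorem smul_add_smul_inf_eq_zero (h : u ⊓ v = 0) (h' : u' ⊓ v' = 0)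
    (hcross : (u - u') * (v - v') = 0) {a b : R} (ha : 0 ≤ a) (hb : 0 ≤ b) :
    (a • u + b • u') ⊓ (a • v + b • v') = 0 := by
  rw [Pi.inf_eq_zero_iff] at h h' ⊢
  intro r
  obtain ⟨hu, hv, huv⟩ := h r
  obtain ⟨hu', hv', huv'⟩ := h' r
  have hcross_r := congrFun hcross r
  simp only [Pi.mul_apply, Pi.sub_apply, Pi.zero_apply] at hcross_r
  simp only [Pi.add_apply, Pi.smul_apply, smul_eq_mul]
  refine ⟨by positivity, by positivity, ?_⟩
  linear_combination (a ^ 2 + a * b) * huv + (b ^ 2 + a * b) * huv' - a * b * hcross_r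

end Complementarity

namespace IsSolEHLCP

variable {n k : ℕ} {C : Fin (k+1) → Matrix (Fin n) (Fin n) ℝ}
  {d : Fin (k-1) → Fin n → ℝ} {q : Fin n → ℝ} {x y : Fin (k+1) → Fin n → ℝ}

theorem inf_succ_eq_zero_of_le (hd : ∀ j r, 0 < d j r) (hx : IsSolEHLCP C d q x)
    {u : Fin n → ℝ} {i : Fin k} (hu : u ⊓ x i.succ = 0) {j : Fin k} (hij : i ≤ j) :
    u ⊓ x j.succ = 0 := by
  suffices ∀ m, (i : ℕ) ≤ m → ∀ hm : m < k, u ⊓ x (Fin.succ ⟨m, hm⟩) = 0 from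
    this j hij j.2
  intro m him
  induction m, him using Nat.le_induction with
  | base => exact fun _ => hu
  | succ m _ ih =>
    exact fun hm => inf_eq_zero_of_slack (ih (by omega)) (hx.2.2 ⟨m, by omega⟩) (hd _)

theorem zero_inf_succ (hd : ∀ j r, 0 < d j r) (hx : IsSolEHLCP C d q x) (i : Fin k) :
    x 0 ⊓ x i.succ = 0 := by
  have : NeZero k := NeZero.of_pos i.pos
  refine hx.inf_succ_eq_zero_of_le hd ?_ (Fin.zero_le i)
  rw [Fin.succ_zero_eq_one']
  exact hx.2.1

theorem slack_inf_succ (hd : ∀ j r, 0 < d j r) (hx : IsSolEHLCP C d q x) {i j : Fin k}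
    (hij : i < j) : (d ⟨i, by omega⟩ - x i.succ) ⊓ x j.succ = 0 :=
  hx.inf_succ_eq_zero_of_le hd (i := ⟨i + 1, by omega⟩) (hx.2.2 ⟨i, by omega⟩) hij

theorem sub_mul_sub_succ_nonpos (hd : ∀ j r, 0 < d j r) (hx : IsSolEHLCP C d q x)
    (hy : IsSolEHLCP C d q y) (i : Fin k) : (x 0 - y 0) * (x i.succ - y i.succ) ≤ 0 :=
  sub_mul_sub_nonpos_of_inf_eq_zero (hx.zero_inf_succ hd i) (hy.zero_inf_succ hd i)

theorem sub_mul_sub_succ_nonneg (hd : ∀ j r, 0 < d j r) (hx : IsSolEHLCP C d q x)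
    (hy : IsSolEHLCP C d q y) {i j : Fin k} (hij : i < j) :
    0 ≤ (x i.succ - y i.succ) * (x j.succ - y j.succ) := by
  have h :=
    sub_mul_sub_nonpos_of_inf_eq_zero (hx.slack_inf_succ hd hij) (hy.slack_inf_succ hd hij)
  rwa [sub_sub_sub_cancel_left, ← neg_sub, neg_mul, neg_nonpos] at h

theorem mulVec_sub_eq_sum_mulVec_sub (hx : IsSolEHLCP C d q x) (hy : IsSolEHLCP C d q y) :
    C 0 *ᵥ (x 0 - y 0) = ∑ i : Fin k, C i.succ *ᵥ (x i.succ - y i.succ) := by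
  rw [mulVec_sub, hx.1, hy.1, add_sub_add_left_eq_sub, ← sum_sub_distrib]
  simp only [mulVec_sub]

theorem smul_add_smul (hk : 0 < k) (hx : IsSolEHLCP C d q x) (hy : IsSolEHLCP C d q y)
    (hxy : ∀ i : Fin k, (x i.castSucc - y i.castSucc) * (x i.succ - y i.succ) = 0)
    {a b : ℝ} (ha : 0 ≤ a) (hb : 0 ≤ b) (hab : a + b = 1) :
    IsSolEHLCP C d q (a • x + b • y) := by
  have : NeZero k := NeZero.of_pos hk
  refine ⟨?_, ?_, fun j => ?_⟩
  · simp only [Pi.add_apply, Pi.smul_apply, mulVec_add, mulVec_smul, hx.1, hy.1,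
      sum_add_distrib, ← smul_sum]
    linear_combination (norm := module) hab • q
  · have h01 := hxy 0
    rw [Fin.castSucc_zero, Fin.succ_zero_eq_one'] at h01
    exact smul_add_smul_inf_eq_zero hx.2.1 hy.2.1 h01 ha hb
  · have hcross := hxy ⟨j + 1, by omega⟩
    simp only [Fin.castSucc_mk, Fin.succ_mk] at hcross
    have h := smul_add_smul_inf_eq_zero (hx.2.2 j) (hy.2.2 j)
      (by rw [sub_sub_sub_cancel_left, ← neg_sub, neg_mul, hcross, neg_zero]) ha hb
    convert h using 2
    · simp only [Pi.add_apply, Pi.smul_apply]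
      linear_combination (norm := module) hab.symm • d j
    · rfl

end IsSolEHLCP

theorem HasCSW.sub_mul_sub_eq_zero {n k : ℕ} {C : Fin (k+1) → Matrix (Fin n) (Fin n) ℝ}
    (h : HasCSW C) {d : Fin (k-1) → Fin n → ℝ} (hd : ∀ j r, 0 < d j r) {q : Fin n → ℝ}
    {x y : Fin (k+1) → Fin n → ℝ} (hx : IsSolEHLCP C d q x) (hy : IsSolEHLCP C d q y) :
    ∀ i : Fin k, (x i.castSucc - y i.castSucc) * (x i.succ - y i.succ) = 0 :=
  h (x - y) (hx.mulVec_sub_eq_sum_mulVec_sub hy) (hx.sub_mul_sub_succ_nonpos hd hy)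
    fun _ _ hij => hx.sub_mul_sub_succ_nonneg hd hy hij

/-- if `C` has the cS-`W` property, then the solution set of
EHLCP(C, d, q) is convex for every `q` and every tuple of positive vectors `d`. -/
theorem csW_implies_convex_solution_set {n k : ℕ} (hk : 0 < k)
    (C : Fin (k+1) → Matrix (Fin n) (Fin n) ℝ) (h : HasCSW C) :
    ∀ (q : Fin n → ℝ) (d : Fin (k-1) → Fin n → ℝ), (∀ j, ∀ r, 0 < d j r) →
      Convex ℝ {x : Fin (k+1) → Fin n → ℝ | IsSolEHLCP C d q x} := by
  rintro q d hd x (hx : IsSolEHLCP C d q x) y (hy : IsSolEHLCP C d q y) a b ha hb hab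
  exact IsSolEHLCP.smul_add_smul hk hx hy (h.sub_mul_sub_eq_zero hd hx hy) ha hb hab
end

section
/- Let C = (C_0, C_1, ..., C_k) be a tuple of real n×n matrices, d = (d_1, ..., d_{k-1}) a tuple of positive vectors in ℝ^n, and q ∈ ℝ^n. If x = (x_0, ..., x_k) and y = (y_0, ..., y_k) both belong to SOL(C, d, q), then C_0(x_0 − y_0) = Σ_{i=1}^k C_i(x_i − y_i), (x_0 − y_0) * (x_i − y_i) ≤ 0 componentwise for all 1 ≤ i ≤ k, and (x_i − y_i) * (x_j − y_j) ≥ 0 componentwise for all 1 ≤ i < j ≤ k. -/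
open Matrix Finset

private lemma inf_zero_facts {a b : ℝ} (h : a ⊓ b = 0) :
    0 ≤ a ∧ 0 ≤ b ∧ (a = 0 ∨ b = 0) := by
  refine ⟨h ▸ inf_le_left, h ▸ inf_le_right, ?_⟩
  rcases le_total a b with hab | hab
  · left; rw [← inf_eq_left.2 hab]; exact h
  · right; rw [← inf_eq_right.2 hab]; exact h

private lemma sol_nonneg {n k : ℕ} {C : Fin (k+1) → Matrix (Fin n) (Fin n) ℝ}
    {d : Fin (k-1) → Fin n → ℝ} {q : Fin n → ℝ}
    {x : Fin (k+1) → Fin n → ℝ} (hx : IsSolEHLCP C d q x) (r : Fin n)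
    (m : ℕ) (hm : m < k) : 0 ≤ x ⟨m+1, by omega⟩ r := by
  cases m with
  | zero =>
    have h1 : (1 : Fin (k+1)) = ⟨1, by omega⟩ := by
      apply Fin.ext; simp [Fin.val_one']; omega
    have := congrFun hx.2.1 r
    simp only [Pi.inf_apply, Pi.zero_apply, h1] at this
    exact (inf_zero_facts this).2.1
  | succ m =>
    have hc := congrFun (hx.2.2 ⟨m, by omega⟩) r
    simp only [Pi.inf_apply, Pi.sub_apply, Pi.zero_apply] at hc
    exact (inf_zero_facts hc).2.1

private lemma sol_chain {n k : ℕ} {C : Fin (k+1) → Matrix (Fin n) (Fin n) ℝ}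
    {d : Fin (k-1) → Fin n → ℝ} (hd : ∀ j r, 0 < d j r) {q : Fin n → ℝ}
    {x : Fin (k+1) → Fin n → ℝ} (hx : IsSolEHLCP C d q x) (r : Fin n)
    (m : ℕ) (hm : m < k) (h0 : x ⟨m+1, by omega⟩ r = 0) :
    ∀ l, m ≤ l → ∀ (hl : l < k), x ⟨l+1, by omega⟩ r = 0 := by
  intro l hml
  induction l, hml using Nat.le_induction with
  | base => intro _; exact h0
  | succ l hml ih =>
    intro hl
    have hl' : l < k := by omega
    have hx0 : x ⟨l+1, by omega⟩ r = 0 := ih hl'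
    have hc := congrFun (hx.2.2 ⟨l, by omega⟩) r
    simp only [Pi.inf_apply, Pi.sub_apply, Pi.zero_apply] at hc
    rw [hx0, sub_zero] at hc
    rcases (inf_zero_facts hc).2.2 with h | h
    · exact absurd h (ne_of_gt (hd _ r))
    · exact h

set_option maxHeartbeats 1000000 in
/-- if `x` and `y` both solve EHLCP(C, d, q), then
`C_0 (x_0 - y_0) = ∑_{i=1}^k C_i (x_i - y_i)`,
`(x_0 - y_0) * (x_i - y_i) ≤ 0` for all `1 ≤ i ≤ k`, and
`(x_i - y_i) * (x_j - y_j) ≥ 0` for all `1 ≤ i < j ≤ k`. -/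
theorem sol_EHLCP_difference_properties {n k : ℕ} (hk : 0 < k)
    (C : Fin (k+1) → Matrix (Fin n) (Fin n) ℝ)
    (d : Fin (k-1) → Fin n → ℝ) (hd : ∀ j, ∀ r, 0 < d j r) (q : Fin n → ℝ)
    (x y : Fin (k+1) → Fin n → ℝ)
    (hx : IsSolEHLCP C d q x) (hy : IsSolEHLCP C d q y) :
    C 0 *ᵥ (x 0 - y 0) = ∑ i : Fin k, C i.succ *ᵥ (x i.succ - y i.succ) ∧
    (∀ i : Fin k, (x 0 - y 0) * (x i.succ - y i.succ) ≤ 0) ∧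
    (∀ i j : Fin k, i < j → 0 ≤ (x i.succ - y i.succ) * (x j.succ - y j.succ)) := by
  have h1 : (1 : Fin (k+1)) = ⟨1, by omega⟩ := by
    apply Fin.ext; simp [Fin.val_one']; omega
  refine ⟨?_, ?_, ?_⟩
  · simp only [Matrix.mulVec_sub]
    rw [hx.1, hy.1, Finset.sum_sub_distrib]
    abel
  · intro i
    rw [Pi.le_def]
    intro r
    simp only [Pi.mul_apply, Pi.sub_apply, Pi.zero_apply]
    have hic : i.succ = ⟨i.1+1, by omega⟩ := rfl
    rw [hic]
    have hxc := congrFun hx.2.1 r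
    simp only [Pi.inf_apply, Pi.zero_apply, h1] at hxc
    have hyc := congrFun hy.2.1 r
    simp only [Pi.inf_apply, Pi.zero_apply, h1] at hyc
    obtain ⟨hx0, hx1, hxz⟩ := inf_zero_facts hxc
    obtain ⟨hy0, hy1, hyz⟩ := inf_zero_facts hyc
    have hxn := sol_nonneg hx r i.1 i.2
    have hyn := sol_nonneg hy r i.1 i.2
    rcases lt_trichotomy (x 0 r) (y 0 r) with h | h | h
    · -- y 0 r > 0 hence y_{i+1} = 0
      have hy1z : y ⟨1, by omega⟩ r = 0 := by
        rcases hyz with h' | h'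
        · exfalso; nlinarith
        · exact h'
      have hz := sol_chain hd hy r 0 hk hy1z i.1 (by omega) i.2
      nlinarith
    · rw [h]; simp
    · have hx1z : x ⟨1, by omega⟩ r = 0 := by
        rcases hxz with h' | h'
        · exfalso; nlinarith
        · exact h'
      have hz := sol_chain hd hx r 0 hk hx1z i.1 (by omega) i.2
      nlinarith
  · intro i j hij
    rw [Pi.le_def]
    intro r
    simp only [Pi.mul_apply, Pi.sub_apply, Pi.zero_apply]
    have hic : i.succ = ⟨i.1+1, by omega⟩ := rfl
    have hjc : j.succ = ⟨j.1+1, by omega⟩ := rfl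
    rw [hic, hjc]
    have hijn : i.1 < j.1 := hij
    have hik : i.1 + 1 < k := by have := j.2; omega
    have hxn := sol_nonneg hx r j.1 j.2
    have hyn := sol_nonneg hy r j.1 j.2
    rcases lt_trichotomy (x ⟨i.1+1, by omega⟩ r) (y ⟨i.1+1, by omega⟩ r) with h | h | h
    · -- x_{i+1} < y_{i+1} ≤ d_i, so x side: x_{i+1} < d_i, x_{i+2} = 0, chain
      have hcx := congrFun (hx.2.2 ⟨i.1, by omega⟩) r
      simp only [Pi.inf_apply, Pi.sub_apply, Pi.zero_apply] at hcx
      obtain ⟨hdx, _, hxz⟩ := inf_zero_facts hcx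
      have hcy := congrFun (hy.2.2 ⟨i.1, by omega⟩) r
      simp only [Pi.inf_apply, Pi.sub_apply, Pi.zero_apply] at hcy
      obtain ⟨hdy, _, _⟩ := inf_zero_facts hcy
      have hx2z : x ⟨i.1+1+1, by omega⟩ r = 0 := by
        rcases hxz with h' | h'
        · exfalso; nlinarith
        · exact h'
      have hz := sol_chain hd hx r (i.1+1) hik hx2z j.1 (by omega) j.2
      nlinarith
    · rw [h]; simp
    · have hcx := congrFun (hx.2.2 ⟨i.1, by omega⟩) r
      simp only [Pi.inf_apply, Pi.sub_apply, Pi.zero_apply] at hcx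
      obtain ⟨hdx, _, _⟩ := inf_zero_facts hcx
      have hcy := congrFun (hy.2.2 ⟨i.1, by omega⟩) r
      simp only [Pi.inf_apply, Pi.sub_apply, Pi.zero_apply] at hcy
      obtain ⟨hdy, _, hyz⟩ := inf_zero_facts hcy
      have hy2z : y ⟨i.1+1+1, by omega⟩ r = 0 := by
        rcases hyz with h' | h'
        · exfalso; nlinarith
        · exact h'
      have hz := sol_chain hd hy r (i.1+1) hik hy2z j.1 (by omega) j.2
      nlinarith
end

section
/- Let C = (C_0, C_1, ..., C_k) be a tuple of real n×n matrices having the cS-W property, and suppose C_0 is an M-matrix. Then for every q ∈ ℝ^n with q > 0 and every tuple d = (d_1, ..., d_{k-1}) of positive vectors in ℝ^n, EHLCP(C, d, q) has a unique solution, namely (C_0^{-1} q, 0, ..., 0). -/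
open Matrix Finset

/-- A real square matrix is an `M`-matrix: nonpositive off-diagonal entries,
invertible, with entrywise nonnegative inverse. -/
def IsMMatrix {n : ℕ} (A : Matrix (Fin n) (Fin n) ℝ) : Prop :=
  (∀ i j, i ≠ j → A i j ≤ 0) ∧ IsUnit A ∧ ∀ i j, 0 ≤ A⁻¹ i j

/-- if `C` has the cS-`W` property and `C_0` is an `M`-matrix, then for every
`q > 0` and every tuple of positive vectors `d`, EHLCP(C, d, q) has a unique solution,
namely `(C_0⁻¹ q, 0, ..., 0)`. -/
theorem csW_MMatrix_unique_solution {n k : ℕ} (hk : 0 < k)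
    (C : Fin (k+1) → Matrix (Fin n) (Fin n) ℝ)
    (hC : HasCSW C) (hM : IsMMatrix (C 0))
    (q : Fin n → ℝ) (hq : ∀ r, 0 < q r)
    (d : Fin (k-1) → Fin n → ℝ) (hd : ∀ j, ∀ r, 0 < d j r) :
    IsSolEHLCP C d q (fun i => if i = 0 then (C 0)⁻¹ *ᵥ q else 0) ∧
    ∀ x : Fin (k+1) → Fin n → ℝ, IsSolEHLCP C d q x →
      x = fun i => if i = 0 then (C 0)⁻¹ *ᵥ q else 0 := by
  
  obtain ⟨hoff, hunit, hinv⟩ := hM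
  have hdet : IsUnit (C 0).det := (Matrix.isUnit_iff_isUnit_det _).mp hunit
  have hCinv : C 0 * (C 0)⁻¹ = 1 := Matrix.mul_nonsing_inv _ hdet
  have hCinv' : (C 0)⁻¹ * C 0 = 1 := Matrix.nonsing_inv_mul _ hdet
  set w : Fin n → ℝ := (C 0)⁻¹ *ᵥ q with hw_def
  have hC0w : C 0 *ᵥ w = q := by
    rw [hw_def, Matrix.mulVec_mulVec, hCinv, Matrix.one_mulVec]
  have hw : ∀ r, 0 < w r := by
    intro r
    have hrow : ∃ j, 0 < (C 0)⁻¹ r j := by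
      by_contra h
      push_neg at h
      have hz : ∀ j, (C 0)⁻¹ r j = 0 := fun j => le_antisymm (h j) (hinv r j)
      have h1 := congrFun (congrFun hCinv' r) r
      simp [Matrix.mul_apply, hz, Matrix.one_apply] at h1
    obtain ⟨j0, hj0⟩ := hrow
    have hpos : 0 < ∑ j, (C 0)⁻¹ r j * q j := by
      apply Finset.sum_pos'
      · intro j _; exact mul_nonneg (hinv r j) (hq j).le
      · exact ⟨j0, Finset.mem_univ _, mul_pos hj0 (hq j0)⟩
    simpa [hw_def, Matrix.mulVec, dotProduct] using hpos
  have hone : (1 : Fin (k+1)) = ⟨1, by omega⟩ := by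
    apply Fin.ext; simp [Fin.val_one']; omega
  have hone0 : (1 : Fin (k+1)) ≠ 0 := by
    rw [hone]; intro h; have := congrArg Fin.val h; simp at this
  have hmin : ∀ a b : ℝ, a ⊓ b = 0 → 0 ≤ a ∧ 0 ≤ b ∧ (a = 0 ∨ b = 0) := by
    intro a b h
    rcases min_eq_iff.mp h with ⟨ha, hab⟩ | ⟨hb, hba⟩
    · exact ⟨ha.ge, le_trans ha.ge hab, Or.inl ha⟩
    · exact ⟨le_trans hb.ge hba, hb.ge, Or.inr hb⟩
  constructor
  · refine ⟨?_, ?_, ?_⟩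
    · have hs : ∀ i : Fin k, (i.succ : Fin (k+1)) ≠ 0 := fun i => Fin.succ_ne_zero i
      beta_reduce
      rw [if_pos rfl, hC0w]
      have : ∀ i : Fin k,
          (C i.succ) *ᵥ (if i.succ = (0 : Fin (k+1)) then w else 0) = 0 := by
        intro i; rw [if_neg (hs i), Matrix.mulVec_zero]
      rw [Finset.sum_congr rfl (fun i _ => this i)]
      simp
    · funext r
      simp only [Pi.inf_apply, Pi.zero_apply, if_pos rfl, if_neg hone0]
      exact min_eq_right (hw r).le
    · intro j
      have h1 : (⟨j.1 + 1, by have := j.2; omega⟩ : Fin (k+1)) ≠ 0 := by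
        intro h; have := congrArg Fin.val h; simp at this
      have h2 : (⟨j.1 + 2, by have := j.2; omega⟩ : Fin (k+1)) ≠ 0 := by
        intro h; have := congrArg Fin.val h; simp at this
      funext r
      simp only [Pi.inf_apply, Pi.zero_apply, Pi.sub_apply, if_neg h1, if_neg h2]
      simpa using (hd j r).le
  · intro x hx
    obtain ⟨heq, h01, hchain⟩ := hx
    set X : ℕ → Fin n → ℝ := fun m => if h : m < k+1 then x ⟨m, h⟩ else 0 with hX_def
    have hXc : ∀ (m : ℕ) (h : m < k+1), X m = x ⟨m, h⟩ := fun m h => dif_pos h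
    have hX0 : X 0 = x 0 := by rw [hXc 0 (by omega)]; congr 1
    have hX1e : X 1 = x 1 := by
      rw [hXc 1 (by omega)]; exact (congrArg x hone).symm
    have hX01 : ∀ r, X 0 r ⊓ X 1 r = 0 := by
      intro r; rw [hX0, hX1e]; simpa using congrFun h01 r
    have hXchain : ∀ m (h2 : 2 ≤ m) (hmk : m ≤ k) (r : Fin n),
        (d ⟨m-2, by omega⟩ r - X (m-1) r) ⊓ X m r = 0 := by
      intro m h2 hmk r
      have hc := congrFun (hchain ⟨m-2, by omega⟩) r
      simp only [Pi.inf_apply, Pi.zero_apply, Pi.sub_apply] at hc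
      have e1 : X (m-1) r = x ⟨m-2+1, by omega⟩ r := by
        rw [show m - 1 = m - 2 + 1 by omega, hXc (m-2+1) (by omega)]
      have e2 : X m r = x ⟨m-2+2, by omega⟩ r := by
        rw [hXc m (by omega)]
        exact congrFun (congrArg x (Fin.ext (show m = m - 2 + 2 by omega))) r
      rw [e1, e2]
      exact hc
    have hxsucc : ∀ i : Fin k, x i.succ = X (i.1+1) := by
      intro i; rw [hXc (i.1+1) (by omega)]
      exact congrArg x (Fin.ext (by simp)).symm
    have hXnn : ∀ m, 1 ≤ m → m ≤ k → ∀ r, 0 ≤ X m r := by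
      intro m h1 h2 r
      rcases Nat.lt_or_ge m 2 with h | h
      · have : m = 1 := by omega
        subst this
        exact (hmin _ _ (hX01 r)).2.1
      · exact (hmin _ _ (hXchain m h h2 r)).2.1
    have key : ∀ m, 1 ≤ m → m ≤ k → ∀ r, 0 < X m r → 0 < X 1 r := by
      intro m
      induction m with
      | zero => omega
      | succ m ih =>
        intro h1 h2 r hpos
        rcases Nat.lt_or_ge m 1 with h | h
        · have : m = 0 := by omega
          subst this; exact hpos
        · have hc := hXchain (m+1) (by omega) h2 r
          rcases (hmin _ _ hc).2.2 with ha | hb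
          · have : X m r = d ⟨m+1-2, by omega⟩ r := by
              have := sub_eq_zero.mp ha
              rw [show m+1-1 = m by omega] at this
              exact this.symm
            exact ih h (by omega) r (this ▸ hd _ r)
          · exact absurd hb (ne_of_gt hpos)
    -- apply cS-W with y
    set y : Fin (k+1) → Fin n → ℝ := fun i => if i = 0 then x 0 - w else x i with hy_def
    have hy0 : y 0 = x 0 - w := by simp [hy_def]
    have hysucc : ∀ i : Fin k, y i.succ = x i.succ := by
      intro i; simp [hy_def, Fin.succ_ne_zero i]
    have heq' : C 0 *ᵥ y 0 = ∑ i : Fin k, C i.succ *ᵥ y i.succ := by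
      rw [hy0, Matrix.mulVec_sub, hC0w, heq]
      simp only [hysucc]
      abel
    have hx0z : ∀ r, 0 < X 1 r → x 0 r = 0 := by
      intro r h
      rcases (hmin _ _ (hX01 r)).2.2 with h0 | h0
      · rw [← hX0]; exact h0
      · exact absurd h0 (ne_of_gt h)
    have h2 : ∀ i : Fin k, y 0 * y i.succ ≤ 0 := by
      intro i
      rw [Pi.le_def]
      intro r
      rw [Pi.mul_apply, hy0, hysucc, hxsucc, Pi.sub_apply, Pi.zero_apply]
      rcases lt_or_eq_of_le (hXnn (i.1+1) (by omega) (by omega) r) with h | h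
      · have hx1 := key (i.1+1) (by omega) (by omega) r h
        rw [hx0z r hx1]
        have : (0 : ℝ) - w r < 0 := by simpa using hw r
        exact le_of_lt (mul_neg_of_neg_of_pos this h)
      · rw [← h, mul_zero]
    have h3 : ∀ i j : Fin k, i < j → 0 ≤ y i.succ * y j.succ := by
      intro i j _
      rw [Pi.le_def]
      intro r
      rw [Pi.zero_apply, Pi.mul_apply, hysucc, hysucc, hxsucc, hxsucc]
      exact mul_nonneg (hXnn _ (by omega) (by omega) r) (hXnn _ (by omega) (by omega) r)
    have hcs := hC y heq' h2 h3 ⟨0, hk⟩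
    have hc0 : (Fin.castSucc ⟨0, hk⟩ : Fin (k+1)) = 0 := by
      apply Fin.ext; simp
    have hc1 : (Fin.succ (⟨0, hk⟩ : Fin k) : Fin (k+1)) = 1 := by
      rw [hone]; apply Fin.ext; simp
    rw [hc0, hc1] at hcs
    have hy1 : y 1 = x 1 := by simp [hy_def, hone0]
    rw [hy0, hy1, ← hX1e] at hcs
    have hX1 : ∀ r, X 1 r = 0 := by
      intro r
      by_contra hne
      have hpos : 0 < X 1 r := lt_of_le_of_ne (hXnn 1 le_rfl hk r) (Ne.symm hne)
      have := congrFun hcs r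
      rw [Pi.mul_apply, Pi.sub_apply, Pi.zero_apply, hx0z r hpos] at this
      have hlt : ((0:ℝ) - w r) * X 1 r < 0 :=
        mul_neg_of_neg_of_pos (by simpa using hw r) hpos
      rw [this] at hlt
      exact lt_irrefl 0 hlt
    have hXall : ∀ m, 1 ≤ m → m ≤ k → ∀ r, X m r = 0 := by
      intro m h1 h2 r
      by_contra hne
      have hpos : 0 < X m r := lt_of_le_of_ne (hXnn m h1 h2 r) (Ne.symm hne)
      exact absurd (hX1 r) (ne_of_gt (key m h1 h2 r hpos))
    have hxsum : ∀ i : Fin k, x i.succ = 0 := by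
      intro i
      funext r
      rw [hxsucc]
      exact hXall (i.1+1) (by omega) (by omega) r
    have hx0w : x 0 = w := by
      have hq' : C 0 *ᵥ x 0 = q := by
        rw [heq]
        simp only [hxsum, Matrix.mulVec_zero]
        simp
      calc x 0 = ((C 0)⁻¹ * C 0) *ᵥ x 0 := by rw [hCinv', Matrix.one_mulVec]
        _ = (C 0)⁻¹ *ᵥ (C 0 *ᵥ x 0) := by rw [Matrix.mulVec_mulVec]
        _ = w := by rw [hq']
    funext i
    by_cases hi : i = 0
    · subst hi; simp [hx0w]
    · rw [if_neg hi]
      have h1 : 1 ≤ i.1 := by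
        rcases Nat.eq_zero_or_pos i.1 with h | h
        · exact absurd (Fin.ext h) hi
        · exact h
      have : x i = X i.1 := by
        rw [hXc i.1 i.2]
      rw [this]
      funext r
      exact hXall i.1 h1 (by omega) r
end

section
/- Let C = (C_0, C_1, ..., C_k) be a tuple of real n×n matrices. Then C has the column ND-W property if and only if every column representative matrix of C has nonzero determinant. -/
open Matrix Finset

/-- `C` has the column ND-`W` property iff every column representative
matrix of `C` has nonzero determinant. -/
theorem columnNDW_iff_det_colRep_ne_zero {n k : ℕ}
    (C : Fin (k+1) → Matrix (Fin n) (Fin n) ℝ) :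
    HasColumnNDW C ↔ ∀ R, IsColRep C R → R.det ≠ 0 := by
  classical
  constructor
  · -- ND-W → every column representative has nonzero determinant
    intro hndw R hR hdet
    obtain ⟨v, hv, hRv⟩ := (Matrix.exists_mulVec_eq_zero_iff).2 hdet
    choose f hf using hR
    set x : Fin (k+1) → Fin n → ℝ :=
      fun i j => if f j = i then (if i = 0 then v j else -v j) else 0 with hx
    have hterm : ∀ r j, C 0 r j * x 0 j - ∑ i : Fin k, C i.succ r j * x i.succ j
        = R r j * v j := by
      intro r j
      by_cases h0 : f j = 0
      · have hz : ∀ i : Fin k, x i.succ j = 0 := by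
          intro i
          simp only [hx]
          rw [if_neg]
          rw [h0]
          exact (Fin.succ_ne_zero i).symm
        have : R r j = C 0 r j := by rw [hf j r, h0]
        rw [Finset.sum_eq_zero fun i _ => by rw [hz i, mul_zero], sub_zero, this]
        congr 1
        simp [hx, h0]
      · obtain ⟨i0, hi0⟩ := Fin.eq_succ_of_ne_zero h0
        have hx0 : x 0 j = 0 := by simp [hx, h0]
        have hsum : ∑ i : Fin k, C i.succ r j * x i.succ j
            = C i0.succ r j * (-v j) := by
          rw [Finset.sum_eq_single i0]
          · simp [hx, hi0, Fin.succ_ne_zero]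
          · intro b _ hb
            have : f j ≠ b.succ := by
              rw [hi0]; exact fun h => hb (Fin.succ_injective _ h.symm)
            simp [hx, this]
          · simp
        have : R r j = C i0.succ r j := by rw [hf j r, hi0]
        rw [hx0, hsum, this]; ring
    have heq : C 0 *ᵥ x 0 = ∑ i : Fin k, C i.succ *ᵥ x i.succ := by
      funext r
      have h1 : (∑ i : Fin k, C i.succ *ᵥ x i.succ) r
          = ∑ j : Fin n, ∑ i : Fin k, C i.succ r j * x i.succ j := by
        rw [Finset.sum_apply]
        simp only [Matrix.mulVec, dotProduct]
        rw [Finset.sum_comm]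
      have h2 : (C 0 *ᵥ x 0) r = ∑ j : Fin n, C 0 r j * x 0 j := rfl
      have h3 : (0 : ℝ) = ∑ j : Fin n, R r j * v j := by
        have := congrFun hRv r
        simpa [Matrix.mulVec, dotProduct] using this.symm
      have : (C 0 *ᵥ x 0) r - (∑ i : Fin k, C i.succ *ᵥ x i.succ) r = 0 := by
        rw [h1, h2, ← Finset.sum_sub_distrib, h3]
        exact Finset.sum_congr rfl fun j _ => hterm r j
      linarith [this]
    have hcomp : ∀ i j : Fin (k+1), i < j → x i * x j = 0 := by
      intro i j hij
      funext l
      by_cases h : f l = i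
      · have : f l ≠ j := by rw [h]; exact ne_of_lt hij
        simp [hx, this]
      · simp [hx, h]
    have hall := hndw x heq hcomp
    obtain ⟨j, hj⟩ := Function.ne_iff.1 hv
    have : x (f j) j = 0 := by rw [hall (f j)]; rfl
    by_cases h0 : f j = 0 <;> simp [hx, h0, hj] at this <;> exact hj this
  · -- all representatives nonsingular → ND-W
    intro hdet x heq hcomp
    have key : ∀ (i i' : Fin (k+1)) (l : Fin n), i ≠ i' → x i l ≠ 0 → x i' l = 0 := by
      intro i i' l hne hxi
      rcases lt_or_gt_of_ne hne with h | h
      · have := congrFun (hcomp i i' h) l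
        simp only [Pi.mul_apply, Pi.zero_apply] at this
        exact (mul_eq_zero.1 this).resolve_left hxi
      · have := congrFun (hcomp i' i h) l
        simp only [Pi.mul_apply, Pi.zero_apply] at this
        exact (mul_eq_zero.1 this).resolve_right hxi
    set f : Fin n → Fin (k+1) :=
      fun j => if h : ∃ i, x i j ≠ 0 then h.choose else 0 with hfdef
    have hfspec : ∀ j (i : Fin (k+1)), i ≠ f j → x i j = 0 := by
      intro j i hi
      by_cases h : ∃ i, x i j ≠ 0
      · have hfj : f j = h.choose := by simp [hfdef, h]
        exact key (f j) i j (Ne.symm hi) (hfj ▸ h.choose_spec)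
      · push_neg at h; exact h i
    set R : Matrix (Fin n) (Fin n) ℝ := Matrix.of (fun r j => C (f j) r j) with hRdef
    have hRrep : IsColRep C R := fun j => ⟨f j, fun r => rfl⟩
    set v : Fin n → ℝ := fun j => if f j = 0 then x 0 j else - x (f j) j with hvdef
    have hterm : ∀ r j, R r j * v j
        = C 0 r j * x 0 j - ∑ i : Fin k, C i.succ r j * x i.succ j := by
      intro r j
      by_cases h0 : f j = 0
      · have hz : ∀ i : Fin k, x i.succ j = 0 := fun i =>
          hfspec j i.succ (by rw [h0]; exact Fin.succ_ne_zero i)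
        simp [hRdef, hvdef, h0, hz]
      · obtain ⟨i0, hi0⟩ := Fin.eq_succ_of_ne_zero h0
        have hx0 : x 0 j = 0 := hfspec j 0 (Ne.symm h0)
        have hsum : ∑ i : Fin k, C i.succ r j * x i.succ j
            = C i0.succ r j * x i0.succ j := by
          rw [Finset.sum_eq_single i0]
          · intro b _ hb
            have : b.succ ≠ f j := by
              rw [hi0]; exact fun h => hb (Fin.succ_injective _ h)
            rw [hfspec j b.succ this, mul_zero]
          · simp
        rw [hx0, hsum]
        simp [hRdef, hvdef, h0, hi0, Fin.succ_ne_zero]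
    have hRv : R *ᵥ v = 0 := by
      funext r
      have h1 : (R *ᵥ v) r = ∑ j : Fin n, R r j * v j := rfl
      have h2 : (C 0 *ᵥ x 0) r = ∑ j : Fin n, C 0 r j * x 0 j := rfl
      have h3 : (∑ i : Fin k, C i.succ *ᵥ x i.succ) r
          = ∑ j : Fin n, ∑ i : Fin k, C i.succ r j * x i.succ j := by
        rw [Finset.sum_apply]
        simp only [Matrix.mulVec, dotProduct]
        rw [Finset.sum_comm]
      have heqr := congrFun heq r
      have : (R *ᵥ v) r = (C 0 *ᵥ x 0) r - (∑ i : Fin k, C i.succ *ᵥ x i.succ) r := by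
        rw [h1, h2, h3, ← Finset.sum_sub_distrib]
        exact Finset.sum_congr rfl fun j _ => hterm r j
      rw [this, heqr, sub_self]; rfl
    have hv0 : v = 0 := by
      by_contra hne
      exact hdet R hRrep ((Matrix.exists_mulVec_eq_zero_iff).1 ⟨v, hne, hRv⟩)
    intro i
    funext j
    by_cases h : i = f j
    · have hvj : v j = 0 := congrFun hv0 j
      subst h
      by_cases h0 : f j = 0
      · rw [h0]; simpa [hvdef, h0] using hvj
      · simpa [hvdef, h0, neg_eq_zero] using hvj
    · exact hfspec j i h
end

section
/- Let C = (C_0, C_1, ..., C_k) be a tuple of real n×n matrices. Then C has the column W-property if and only if C has both the cS-W property and the column ND-W property. -/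
open Matrix Finset

/-!
If the entries `y i j` of a family with `∑ i, C i *ᵥ y i = 0` have, for each coordinate `j`, a
common sign, then `z = ∑ i, y i` lies in the kernel of the column mixture
`∑ i, C i * diagonal (w i)` with the nonnegative weights `w i = y i / z`. By multilinearity of the
determinant in the columns, the determinant of such a mixture is a nonnegative combination, with
some positive coefficient, of determinants of column representatives; under the column
`W`-property it is therefore nonzero, so `z = 0` and `y = 0`. After flipping the signs of
`x 1, …, x k`, the hypotheses of both cS-`W` and column ND-`W` produce such families.

Conversely, column ND-`W` makes every column representative nonsingular. Moving one column from
`C i` to `C (i + 1)` cannot change the sign of the determinant: otherwise some convex combination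
of the two choices for that column is singular, and a kernel vector gives a solution on which
cS-`W` forces the moved coordinate to vanish, after which column ND-`W` forces the kernel vector to
vanish. Such moves connect all column representatives.
-/

section ColumnMixture

variable {ι m R : Type*} [Fintype m] [CommRing R]

def colRep (C : ι → Matrix m m R) (f : m → ι) : Matrix m m R :=
  of fun r j => C (f j) r j

variable [DecidableEq m] [Fintype ι]

def colMix (C : ι → Matrix m m R) (w : ι → m → R) : Matrix m m R :=
  ∑ i, C i * diagonal (w i)

variable (C : ι → Matrix m m R)

lemma colMix_apply (w : ι → m → R) (r j : m) : colMix C w r j = ∑ i, w i j * C i r j := by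
  simp [colMix, Matrix.sum_apply, mul_comm]

lemma colMix_mulVec (w : ι → m → R) (z : m → R) :
    colMix C w *ᵥ z = ∑ i, C i *ᵥ (w i * z) := by
  simp only [colMix, Matrix.sum_mulVec, ← mulVec_mulVec]
  congr! with i
  ext j
  simp [mulVec_diagonal]

lemma colMix_add (v w : ι → m → R) : colMix C (v + w) = colMix C v + colMix C w := by
  ext r j
  simp [colMix_apply, add_mul, sum_add_distrib]

lemma colMix_smul (c : R) (w : ι → m → R) : colMix C (c • w) = c • colMix C w := by
  ext r j
  simp [colMix_apply, mul_sum, mul_assoc]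

lemma det_colMix (w : ι → m → R) :
    (colMix C w).det = ∑ f : m → ι, (∏ j, w (f j) j) * (colRep C f).det := by
  classical
  have hrows : (colMix C w)ᵀ = fun j => ∑ i, w i j • fun r => C i r j := by
    ext j r
    simp [colMix_apply, Finset.sum_apply]
  rw [← det_transpose, hrows]
  refine ((detRowAlternating : (m → R) [⋀^m]→ₗ[R] R).toMultilinearMap.map_sum _).trans ?_
  congr! with f
  rw [AlternatingMap.coe_multilinearMap, AlternatingMap.map_smul_univ, smul_eq_mul,
    ← det_transpose (colRep C f)]
  rfl

variable [DecidableEq ι]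

def selectWeights (f : m → ι) : ι → m → R :=
  fun i j => if f j = i then 1 else 0

lemma colRep_eq_colMix (f : m → ι) : colRep C f = colMix C (selectWeights f) := by
  ext r j
  simp [colMix_apply, colRep, selectWeights]

omit [Fintype m] [DecidableEq m] [Fintype ι] in
lemma selectWeights_mul_selectWeights (f : m → ι) {i l : ι} (hil : i ≠ l) :
    selectWeights f i * selectWeights f l = (0 : m → R) := by
  ext j
  by_cases h : f j = i <;> simp [selectWeights, h, hil]

end ColumnMixture

section SignCoherent

variable {ι m R : Type*} [Fintype ι] [Fintype m] [DecidableEq m] (C : ι → Matrix m m R)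

lemma pos_mul_det_colMix [CommRing R] [LinearOrder R] [IsStrictOrderedRing R] {ε : R}
    (hε : ∀ f, 0 < ε * (colRep C f).det) {w : ι → m → R} (hw : ∀ i j, 0 ≤ w i j)
    (hpos : ∀ j, ∃ i, 0 < w i j) : 0 < ε * (colMix C w).det := by
  choose g hg using hpos
  rw [det_colMix, mul_sum]
  refine sum_pos' (fun f _ => ?_) ⟨g, mem_univ _, ?_⟩
  · rw [mul_left_comm]
    exact mul_nonneg (prod_nonneg fun j _ => hw _ _) (hε f).le
  · rw [mul_left_comm]
    exact mul_pos (prod_pos fun j _ => hg j) (hε g)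

lemma eq_zero_of_sum_mulVec_eq_zero [Field R] [LinearOrder R] [IsStrictOrderedRing R] {ε : R}
    (hε : ∀ f, 0 < ε * (colRep C f).det) {y : ι → m → R}
    (hy : ∀ i l j, 0 ≤ y i j * y l j) (hsum : ∑ i, C i *ᵥ y i = 0) : y = 0 := by
  rcases isEmpty_or_nonempty ι with hι | ⟨⟨i₀⟩⟩
  · exact Subsingleton.elim _ _
  set z : m → R := ∑ i, y i
  have hyz : ∀ i j, 0 ≤ y i j * z j := fun i j => by
    simpa [z, Finset.sum_apply, mul_sum] using sum_nonneg fun l _ => hy i l j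
  have hz : ∀ i j, z j = 0 → y i j = 0 := fun i j hzj => by
    have hsq : ∑ l, y i j * y l j = 0 := by
      simpa [z, Finset.sum_apply, mul_sum] using congrArg (y i j * ·) hzj
    exact mul_self_eq_zero.1 ((sum_eq_zero_iff_of_nonneg fun l _ => hy i l j).1 hsq i
      (mem_univ _))
  -- where `z j = 0` all `y i j` vanish, so any positive weights do
  let w : ι → m → R := fun i j => if z j = 0 then 1 else y i j / z j
  have hwz : ∀ i, w i * z = y i := fun i => by
    ext j
    by_cases hzj : z j = 0 <;> simp [w, hzj, hz i j]
  have hw : ∀ i j, 0 ≤ w i j := fun i j => by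
    by_cases hzj : z j = 0
    · simp [w, hzj]
    · simpa [w, hzj, ← mul_div_mul_right (y i j) (z j) hzj] using
        div_nonneg (hyz i j) (mul_self_nonneg (z j))
  have hpos : ∀ j, ∃ i, 0 < w i j := fun j => by
    by_cases hzj : z j = 0
    · exact ⟨i₀, by simp [w, hzj]⟩
    · by_contra! hneg
      have hsum1 : ∑ i, w i j = 1 := by
        simp only [w, if_neg hzj, ← sum_div]
        simpa [z, Finset.sum_apply] using div_self hzj
      linarith [sum_nonpos fun i (_ : i ∈ univ) => hneg i]
  have hker : colMix C w *ᵥ z = 0 := by simp only [colMix_mulVec, hwz, hsum]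
  have hdet : (colMix C w).det ≠ 0 := right_ne_zero_of_mul (pos_mul_det_colMix C hε hw hpos).ne'
  have hz0 : z = 0 := eq_zero_of_mulVec_eq_zero hdet hker
  ext i j
  simp [← hwz i, hz0]

end SignCoherent

section FlipTail

variable {k : ℕ} {β : Type*}

def flipTail [Neg β] (x : Fin (k+1) → β) : Fin (k+1) → β :=
  fun i => if i = 0 then x i else -x i

@[simp]
lemma flipTail_zero [Neg β] (x : Fin (k+1) → β) : flipTail x 0 = x 0 := if_pos rfl

@[simp]
lemma flipTail_succ [Neg β] (x : Fin (k+1) → β) (i : Fin k) : flipTail x i.succ = -x i.succ :=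
  if_neg (Fin.succ_ne_zero i)

lemma flipTail_flipTail [InvolutiveNeg β] (x : Fin (k+1) → β) : flipTail (flipTail x) = x := by
  ext i
  by_cases hi : i = 0 <;> simp [flipTail, hi]

lemma flipTail_eq_zero_iff [SubtractionMonoid β] {x : Fin (k+1) → β} :
    flipTail x = 0 ↔ x = 0 := by
  refine ⟨fun h => ?_, fun h => by ext i; simp [flipTail, h]⟩
  ext i : 1
  have := congrFun h i
  by_cases hi : i = 0 <;> simp_all [flipTail]

lemma flipTail_mul_flipTail_eq_zero_iff [Ring β] (x : Fin (k+1) → β) (i l : Fin (k+1)) :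
    flipTail x i * flipTail x l = 0 ↔ x i * x l = 0 := by
  unfold flipTail
  split_ifs <;> simp

lemma flipTail_mul_flipTail_nonneg {m R : Type*} [CommRing R] [LinearOrder R]
    [IsStrictOrderedRing R] {x : Fin (k+1) → m → R} (h0 : ∀ i : Fin k, x 0 * x i.succ ≤ 0)
    (hsucc : ∀ i j : Fin k, i < j → 0 ≤ x i.succ * x j.succ) (i l : Fin (k+1)) (j : m) :
    0 ≤ flipTail x i j * flipTail x l j := by
  induction i using Fin.cases <;> induction l using Fin.cases
  · exact mul_self_nonneg _
  case zero.succ l => simpa using h0 l j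
  case succ.zero i => simpa [mul_comm (x i.succ j)] using h0 i j
  case succ.succ i l =>
    rcases lt_trichotomy i l with hil | rfl | hli
    · simpa using hsucc i l hil j
    · exact mul_self_nonneg _
    · simpa [mul_comm (x i.succ j)] using hsucc l i hli j

lemma mulVec_eq_sum_iff_sum_mulVec_flipTail_eq_zero {m R : Type*} [Fintype m] [CommRing R]
    (C : Fin (k+1) → Matrix m m R) (x : Fin (k+1) → m → R) :
    C 0 *ᵥ x 0 = ∑ i : Fin k, C i.succ *ᵥ x i.succ ↔ ∑ i, C i *ᵥ flipTail x i = 0 := by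
  simp [Fin.sum_univ_succ, mulVec_neg, sum_neg_distrib, ← sub_eq_add_neg, sub_eq_zero]

end FlipTail

lemma Function.apply_eq_apply_of_forall_update {α β γ : Type*} [Fintype α] [DecidableEq α]
    (P : (α → β) → γ) (h : ∀ f a b, P (Function.update f a b) = P f) (f g : α → β) :
    P f = P g := by
  suffices ∀ s : Finset α, P (s.piecewise f g) = P g by simpa using this univ
  intro s
  induction s using Finset.induction_on with
  | empty => simp
  | insert a s _ ih => rw [piecewise_insert, h, ih]

lemma sign_eq_sign_of_mul_pos {R : Type*} [Ring R] [LinearOrder R] [IsStrictOrderedRing R]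
    {a b : R} (h : 0 < a * b) : SignType.sign a = SignType.sign b := by
  rcases mul_pos_iff.1 h with ⟨ha, hb⟩ | ⟨ha, hb⟩ <;> simp [sign_pos, sign_neg, ha, hb]

lemma exists_mem_Ioo_det_smul_add_smul_eq_zero {m : Type*} [Fintype m] [DecidableEq m]
    {A B : Matrix m m ℝ} (h : A.det * B.det < 0) :
    ∃ t ∈ Set.Ioo (0 : ℝ) 1, ((1 - t) • A + t • B).det = 0 := by
  let g : ℝ → ℝ := fun t => ((1 - t) • A + t • B).det
  have hg : Continuous g := by fun_prop
  have hzero : (0 : ℝ) ∈ Set.uIcc (g 0) (g 1) := by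
    rcases mul_neg_iff.1 h with ⟨hA, hB⟩ | ⟨hA, hB⟩ <;>
      simp [g, Set.mem_uIcc, hA.le, hB.le]
  obtain ⟨t, ht, hgt⟩ := intermediate_value_uIcc hg.continuousOn hzero
  rw [Set.uIcc_of_le zero_le_one] at ht
  refine ⟨t, ⟨ht.1.lt_of_ne ?_, ht.2.lt_of_ne ?_⟩, hgt⟩ <;> rintro rfl
  · exact left_ne_zero_of_mul h.ne (by simpa [g] using hgt)
  · exact right_ne_zero_of_mul h.ne (by simpa [g] using hgt)

section ColumnProperties

variable {n k : ℕ} (C : Fin (k+1) → Matrix (Fin n) (Fin n) ℝ)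

lemma isColRep_colRep (f : Fin n → Fin (k+1)) : IsColRep C (colRep C f) :=
  fun j => ⟨f j, fun _ => rfl⟩

lemma IsColRep.exists_eq_colRep {C : Fin (k+1) → Matrix (Fin n) (Fin n) ℝ}
    {R : Matrix (Fin n) (Fin n) ℝ} (h : IsColRep C R) : ∃ f, R = colRep C f := by
  choose f hf using h
  exact ⟨f, by ext r j; exact hf j r⟩

variable {C}

lemma HasColumnW.exists_pos_mul_det (hW : HasColumnW C) :
    ∃ ε : ℝ, ∀ f, 0 < ε * (colRep C f).det := by
  rcases hW with h | h
  · exact ⟨1, fun f => by simpa using h _ (isColRep_colRep C f)⟩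
  · exact ⟨-1, fun f => by simpa using h _ (isColRep_colRep C f)⟩

lemma HasColumnW.eq_zero (hW : HasColumnW C) {y : Fin (k+1) → Fin n → ℝ}
    (hsum : ∑ i, C i *ᵥ y i = 0) (hy : ∀ i l j, 0 ≤ y i j * y l j) : y = 0 :=
  have ⟨_, hε⟩ := hW.exists_pos_mul_det
  eq_zero_of_sum_mulVec_eq_zero C hε hy hsum

lemma HasColumnW.hasCSW (hW : HasColumnW C) : HasCSW C := by
  intro x hx h0 hsucc i
  have hflip := hW.eq_zero ((mulVec_eq_sum_iff_sum_mulVec_flipTail_eq_zero C x).1 hx)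
    (flipTail_mul_flipTail_nonneg h0 hsucc)
  simp [flipTail_eq_zero_iff.1 hflip]

lemma HasColumnW.hasColumnNDW (hW : HasColumnW C) : HasColumnNDW C := by
  intro x hx hprod
  have hflip := hW.eq_zero ((mulVec_eq_sum_iff_sum_mulVec_flipTail_eq_zero C x).1 hx)
    (flipTail_mul_flipTail_nonneg (fun i => (hprod 0 i.succ i.succ_pos).le)
      (fun i j hij => (hprod i.succ j.succ (Fin.succ_lt_succ_iff.2 hij)).ge))
  simp [flipTail_eq_zero_iff.1 hflip]

lemma HasCSW.mul_eq_zero (hS : HasCSW C) {y : Fin (k+1) → Fin n → ℝ}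
    (hsum : ∑ i, C i *ᵥ y i = 0) (hy : ∀ i l j, 0 ≤ y i j * y l j) (i : Fin k) :
    y i.castSucc * y i.succ = 0 := by
  rw [← flipTail_flipTail y, ← mulVec_eq_sum_iff_sum_mulVec_flipTail_eq_zero] at hsum
  rw [← flipTail_mul_flipTail_eq_zero_iff]
  exact hS _ hsum (fun i j => by simpa using hy 0 i.succ j)
    (fun i l _ j => by simpa using hy i.succ l.succ j) i

lemma HasColumnNDW.eq_zero (hN : HasColumnNDW C) {y : Fin (k+1) → Fin n → ℝ}
    (hsum : ∑ i, C i *ᵥ y i = 0) (hy : ∀ i l, i ≠ l → y i * y l = 0) : y = 0 := by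
  rw [← flipTail_flipTail y, ← mulVec_eq_sum_iff_sum_mulVec_flipTail_eq_zero] at hsum
  rw [← flipTail_eq_zero_iff]
  exact funext <| hN _ hsum fun i l hil =>
    (flipTail_mul_flipTail_eq_zero_iff y i l).2 (hy i l hil.ne)

lemma HasColumnNDW.det_colRep_ne_zero (hN : HasColumnNDW C) (f : Fin n → Fin (k+1)) :
    (colRep C f).det ≠ 0 := by
  intro hdet
  obtain ⟨z, hz, hker⟩ := exists_mulVec_eq_zero_iff.2 hdet
  have hy : (fun i => selectWeights f i * z) = 0 := by
    refine hN.eq_zero (by rw [← colMix_mulVec, ← colRep_eq_colMix, hker]) fun i l hil => ?_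
    rw [mul_mul_mul_comm, selectWeights_mul_selectWeights f hil, zero_mul]
  exact hz (funext fun j => by simpa [selectWeights] using congrFun (congrFun hy (f j)) j)

lemma pos_mul_det_colRep_update_succ (hS : HasCSW C) (hN : HasColumnNDW C)
    {f : Fin n → Fin (k+1)} {j₀ : Fin n} {i : Fin k} (hf : f j₀ = i.castSucc) :
    0 < (colRep C f).det * (colRep C (Function.update f j₀ i.succ)).det := by
  set f' := Function.update f j₀ i.succ
  by_contra! hle
  have hneg : (colRep C f).det * (colRep C f').det < 0 :=
    hle.lt_of_ne (mul_ne_zero (hN.det_colRep_ne_zero f) (hN.det_colRep_ne_zero f'))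
  obtain ⟨t, ⟨ht0, ht1⟩, hdet⟩ := exists_mem_Ioo_det_smul_add_smul_eq_zero hneg
  set w : Fin (k+1) → Fin n → ℝ := (1 - t) • selectWeights f + t • selectWeights f'
  have hmix : colMix C w = (1 - t) • colRep C f + t • colRep C f' := by
    simp only [w, colMix_add, colMix_smul, colRep_eq_colMix]
  obtain ⟨z, hz, hker⟩ := exists_mulVec_eq_zero_iff.2 (hmix ▸ hdet)
  have hsum : ∑ i, C i *ᵥ (w i * z) = 0 := by rw [← colMix_mulVec, hker]
  have hw : ∀ i j, 0 ≤ w i j := fun i j => by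
    simp only [w, selectWeights, Pi.add_apply, Pi.smul_apply, smul_eq_mul]
    split_ifs <;> nlinarith
  have hy : ∀ i l j, 0 ≤ (w i * z) j * (w l * z) j := fun i l j => by
    simpa only [Pi.mul_apply, mul_mul_mul_comm] using
      mul_nonneg (mul_nonneg (hw i j) (hw l j)) (mul_self_nonneg (z j))
  have hzj₀ : z j₀ = 0 := by
    have hprod := congrFun (hS.mul_eq_zero hsum hy i) j₀
    have hne : i.succ ≠ i.castSucc := Fin.castSucc_lt_succ.ne'
    simpa [w, f', selectWeights, hf, hne, hne.symm, ht0.ne', ht1.ne', sub_eq_zero] using hprod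
  have hsel : ∀ i, w i * z = selectWeights f i * z := fun i => by
    ext j
    by_cases hj : j = j₀
    · simp [hj, hzj₀]
    · simp only [w, f', selectWeights, Function.update_of_ne hj, Pi.mul_apply, Pi.add_apply,
        Pi.smul_apply, smul_eq_mul]
      split_ifs <;> ring
  apply hz
  refine eq_zero_of_mulVec_eq_zero (hN.det_colRep_ne_zero f) ?_
  rw [colRep_eq_colMix, colMix_mulVec, ← hsum]
  exact sum_congr rfl fun i _ => by rw [hsel]

lemma sign_det_colRep_update (hS : HasCSW C) (hN : HasColumnNDW C) (f : Fin n → Fin (k+1))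
    (j : Fin n) (i : Fin (k+1)) :
    SignType.sign (colRep C (Function.update f j i)).det = SignType.sign (colRep C f).det := by
  have hbase : ∀ i, SignType.sign (colRep C (Function.update f j i)).det =
      SignType.sign (colRep C (Function.update f j 0)).det := by
    intro i
    induction i using Fin.induction with
    | zero => rfl
    | succ i ih =>
      have hstep := pos_mul_det_colRep_update_succ hS hN (Function.update_self j i.castSucc f)
      rw [Function.update_idem] at hstep
      rw [← ih, sign_eq_sign_of_mul_pos hstep]
  rw [hbase, ← hbase (f j), Function.update_eq_self]

end ColumnProperties

/-- `C` has the column `W`-property iff `C` has both the cS-`W` property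
and the column ND-`W` property. -/
theorem columnW_iff_csW_and_columnNDW {n k : ℕ}
    (C : Fin (k+1) → Matrix (Fin n) (Fin n) ℝ) :
    HasColumnW C ↔ HasCSW C ∧ HasColumnNDW C := by
  refine ⟨fun hW => ⟨hW.hasCSW, hW.hasColumnNDW⟩, fun ⟨hS, hN⟩ => ?_⟩
  have hsign : ∀ f, SignType.sign (colRep C f).det = SignType.sign (colRep C fun _ => 0).det :=
    fun f => Function.apply_eq_apply_of_forall_update (fun f => SignType.sign (colRep C f).det)
      (sign_det_colRep_update hS hN) f _
  rcases (hN.det_colRep_ne_zero fun _ => 0).lt_or_gt with hneg | hpos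
  · right
    intro R hR
    obtain ⟨f, rfl⟩ := hR.exists_eq_colRep
    rw [← sign_eq_neg_one_iff, hsign, sign_eq_neg_one_iff]
    exact hneg
  · left
    intro R hR
    obtain ⟨f, rfl⟩ := hR.exists_eq_colRep
    rw [← sign_eq_one_iff, hsign, sign_eq_one_iff]
    exact hpos
end

section
/- Let C = (C_0, C_1, ..., C_k) be a tuple of real n×n matrices. Then C has the column W-property if and only if C has both the column W_0-property and the column ND-W property. -/
open Matrix Finset

section Aux

variable {n k : ℕ}

/-- Auxiliary symmetric nondegeneracy property. -/
def SymND (C : Fin (k+1) → Matrix (Fin n) (Fin n) ℝ) : Prop :=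
  ∀ y : Fin (k+1) → Fin n → ℝ,
    (∑ i, C i *ᵥ y i) = 0 → (∀ i j, i ≠ j → y i * y j = 0) → ∀ i, y i = 0

lemma symND_of_dets {C : Fin (k+1) → Matrix (Fin n) (Fin n) ℝ}
    (h : ∀ R, IsColRep C R → R.det ≠ 0) : SymND C := by
  classical
  intro y hsum hperp
  set c : Fin n → Fin (k+1) := fun j => if h : ∃ i, y i j ≠ 0 then h.choose else 0 with hc
  set R : Matrix (Fin n) (Fin n) ℝ := Matrix.of fun r j => C (c j) r j with hRdef
  have hrep : IsColRep C R := fun j => ⟨c j, fun r => rfl⟩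
  set z : Fin n → ℝ := fun j => y (c j) j with hz
  have hcmem : ∀ j, (∃ i, y i j ≠ 0) → y (c j) j ≠ 0 := by
    intro j hex
    have : c j = hex.choose := by simp [hc, dif_pos hex]
    rw [this]
    exact hex.choose_spec
  have hzero : ∀ i j, i ≠ c j → y i j = 0 := by
    intro i j hne
    by_contra hy
    have hex : ∃ i, y i j ≠ 0 := ⟨i, hy⟩
    have hyc : y (c j) j ≠ 0 := hcmem j hex
    have := congrFun (hperp i (c j) hne) j
    simp only [Pi.mul_apply, Pi.zero_apply, mul_eq_zero] at this
    tauto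
  have hmul : R *ᵥ z = 0 := by
    funext r
    have h0 := congrFun hsum r
    simp only [Finset.sum_apply, Pi.zero_apply, Matrix.mulVec, dotProduct] at h0 ⊢
    rw [Finset.sum_comm] at h0
    rw [← h0]
    refine Finset.sum_congr rfl fun j _ => ?_
    rw [Finset.sum_eq_single (c j)]
    · rfl
    · intro i _ hi
      rw [hzero i j hi, mul_zero]
    · intro hmem
      exact absurd (Finset.mem_univ _) hmem
  have hz0 : z = 0 := by
    by_contra hz0
    exact h R hrep (Matrix.exists_mulVec_eq_zero_iff.mp ⟨z, hz0, hmul⟩)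
  intro i
  funext j
  by_contra hy
  have hex : ∃ i, y i j ≠ 0 := ⟨i, hy⟩
  exact hcmem j hex (congrFun hz0 j)

lemma dets_of_symND {C : Fin (k+1) → Matrix (Fin n) (Fin n) ℝ}
    (h : SymND C) : ∀ R, IsColRep C R → R.det ≠ 0 := by
  classical
  intro R hrep hdet
  obtain ⟨z, hz0, hz⟩ := Matrix.exists_mulVec_eq_zero_iff.mpr hdet
  choose c hcspec using hrep
  set y : Fin (k+1) → Fin n → ℝ := fun i j => if i = c j then z j else 0 with hy
  have hsum : ∑ i, C i *ᵥ y i = 0 := by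
    funext r
    have h0 := congrFun hz r
    simp only [Pi.zero_apply, Matrix.mulVec, dotProduct] at h0
    simp only [Finset.sum_apply, Pi.zero_apply, Matrix.mulVec, dotProduct]
    rw [Finset.sum_comm, ← h0]
    refine Finset.sum_congr rfl fun j _ => ?_
    rw [Finset.sum_eq_single (c j)]
    · simp [hy, hcspec j r]
    · intro i _ hi
      simp [hy, hi]
    · intro hmem
      exact absurd (Finset.mem_univ _) hmem
  have hperp : ∀ i j, i ≠ j → y i * y j = 0 := by
    intro i j hne
    funext m
    simp only [hy, Pi.mul_apply, Pi.zero_apply]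
    by_cases hi : i = c m
    · have : j ≠ c m := hi ▸ hne.symm
      simp [this]
    · simp [hi]
  have hall := h y hsum hperp
  apply hz0
  funext j
  have := congrFun (hall (c j)) j
  simpa [hy] using this

lemma sum_transform {C : Fin (k+1) → Matrix (Fin n) (Fin n) ℝ}
    (x y : Fin (k+1) → Fin n → ℝ) (h0 : y 0 = x 0)
    (hs : ∀ i : Fin k, y i.succ = -x i.succ) :
    (∑ i, C i *ᵥ y i) =
      C 0 *ᵥ x 0 - ∑ i : Fin k, C i.succ *ᵥ x i.succ := by
  rw [Fin.sum_univ_succ, h0]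
  rw [Finset.sum_congr rfl fun i _ => by rw [hs i, Matrix.mulVec_neg]]
  rw [Finset.sum_neg_distrib, sub_eq_add_neg]

lemma perp_transform (x y : Fin (k+1) → Fin n → ℝ)
    (hsign : ∀ i, y i = x i ∨ y i = -x i)
    (hx : ∀ i j, i ≠ j → x i * x j = 0) :
    ∀ i j, i ≠ j → y i * y j = 0 := by
  intro i j hne
  funext m
  have h0 := congrFun (hx i j hne) m
  simp only [Pi.mul_apply, Pi.zero_apply] at h0 ⊢
  rcases hsign i with hi | hi <;> rcases hsign j with hj | hj <;>
    simp only [hi, hj, Pi.neg_apply, neg_mul, mul_neg, neg_neg, neg_eq_zero] <;>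
    exact h0

lemma perp_symm (x : Fin (k+1) → Fin n → ℝ)
    (hperp : ∀ i j : Fin (k+1), i < j → x i * x j = 0) :
    ∀ i j, i ≠ j → x i * x j = 0 := by
  intro i j hne
  rcases hne.lt_or_gt with h1 | h1
  · exact hperp i j h1
  · funext m
    have := congrFun (hperp j i h1) m
    simp only [Pi.mul_apply, Pi.zero_apply] at this ⊢
    rw [mul_comm]; exact this

lemma ndw_iff_symND {C : Fin (k+1) → Matrix (Fin n) (Fin n) ℝ} :
    HasColumnNDW C ↔ SymND C := by
  constructor
  · intro h y hsum hperp
    set x : Fin (k+1) → Fin n → ℝ := fun i => if i = 0 then y 0 else -y i with hx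
    have hx0 : x 0 = y 0 := by simp [hx]
    have hxs : ∀ i : Fin (k+1), i ≠ 0 → x i = -y i := by
      intro i hi; simp [hx, hi]
    have hys : ∀ i : Fin k, y i.succ = -x i.succ := by
      intro i; rw [hxs i.succ (Fin.succ_ne_zero i), neg_neg]
    have heq : C 0 *ᵥ x 0 = ∑ i : Fin k, C i.succ *ᵥ x i.succ := by
      have := sum_transform (C := C) x y hx0.symm hys
      rw [hsum] at this
      exact sub_eq_zero.mp this.symm
    have hsign : ∀ i, x i = y i ∨ x i = -y i := by
      intro i
      by_cases hi : i = 0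
      · left; rw [hi]; exact hx0
      · right; exact hxs i hi
    have hperpx := perp_transform y x hsign hperp
    have hall := h x heq (fun i j hlt => hperpx i j hlt.ne)
    intro i
    by_cases hi : i = 0
    · rw [hi, ← hx0, hall 0]
    · have := hxs i hi
      rw [hall i] at this
      rw [← neg_neg (y i), ← this, neg_zero]
  · intro h x heq hperp
    set y : Fin (k+1) → Fin n → ℝ := fun i => if i = 0 then x 0 else -x i with hy
    have hy0 : y 0 = x 0 := by simp [hy]
    have hys : ∀ i : Fin (k+1), i ≠ 0 → y i = -x i := by
      intro i hi; simp [hy, hi]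
    have hsum : (∑ i, C i *ᵥ y i) = 0 := by
      rw [sum_transform x y hy0 (fun i => hys i.succ (Fin.succ_ne_zero i)), heq, sub_self]
    have hsign : ∀ i, y i = x i ∨ y i = -x i := by
      intro i
      by_cases hi : i = 0
      · left; rw [hi]; exact hy0
      · right; exact hys i hi
    have hperpy := perp_transform x y hsign (perp_symm x hperp)
    have hall := h y hsum hperpy
    intro i
    by_cases hi : i = 0
    · rw [hi, ← hy0, hall 0]
    · have := hys i hi
      rw [hall i] at this
      rw [← neg_neg (x i), ← this, neg_zero]

lemma colRep_self {C : Fin (k+1) → Matrix (Fin n) (Fin n) ℝ} :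
    IsColRep C (C 0) := fun _ => ⟨0, fun _ => rfl⟩

end Aux

/-- `C` has the column `W`-property iff `C` has both the column
`W₀`-property and the column ND-`W` property. -/
theorem columnW_iff_columnW0_and_columnNDW {n k : ℕ}
    (C : Fin (k+1) → Matrix (Fin n) (Fin n) ℝ) :
    HasColumnW C ↔ HasColumnW0 C ∧ HasColumnNDW C := by
  constructor
  · intro hW
    have hne : ∀ R, IsColRep C R → R.det ≠ 0 := by
      rcases hW with h | h
      · exact fun R hr => (h R hr).ne'
      · exact fun R hr => (h R hr).ne
    refine ⟨?_, ndw_iff_symND.mpr (symND_of_dets hne)⟩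
    rcases hW with h | h
    · exact Or.inl ⟨fun R hr => (h R hr).le, C 0, colRep_self, h _ colRep_self⟩
    · exact Or.inr ⟨fun R hr => (h R hr).le, C 0, colRep_self, h _ colRep_self⟩
  · rintro ⟨hW0, hND⟩
    have hne := dets_of_symND (ndw_iff_symND.mp hND)
    rcases hW0 with ⟨hle, -⟩ | ⟨hle, -⟩
    · exact Or.inl fun R hr => (hle R hr).lt_of_ne' (hne R hr)
    · exact Or.inr fun R hr => (hle R hr).lt_of_ne (hne R hr)
end

section
/- Let n = 2 and k = 2, and let C = (C_0, C_1, C_2) where C_0 = C_2 = I (the 2×2 identity matrix) and C_1 is the 2×2 matrix with rows (0, 1) and (−1, 0). Then C has the cS-W property but C does not have the column W-property. -/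
open Matrix Finset

/-- with `n = 2`, `k = 2`, `C₀ = C₂ = I` and `C₁ = !![0, 1; -1, 0]`,
the tuple `C` has the cS-`W` property but not the column `W`-property. -/
theorem csW_not_columnW_example :
    HasCSW (n := 2) (k := 2) ![1, !![0, 1; -1, 0], 1] ∧
    ¬ HasColumnW (n := 2) (k := 2) ![1, !![0, 1; -1, 0], 1] := by
  constructor
  · intro x heq h0 h12 i
    have e0 : x 0 0 = x 1 1 + x 2 0 := by
      have := congrFun heq 0
      simp [Fin.sum_univ_two, Matrix.mulVec, dotProduct, Fin.sum_univ_two,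
        Matrix.one_apply] at this
      fin_cases i <;> linarith
    have e1 : x 0 1 = -x 1 0 + x 2 1 := by
      have := congrFun heq 1
      simp [Fin.sum_univ_two, Matrix.mulVec, dotProduct, Fin.sum_univ_two,
        Matrix.one_apply] at this
      linarith
    have hkey : x 0 0 * x 1 0 + x 0 1 * x 1 1 = x 1 0 * x 2 0 + x 1 1 * x 2 1 := by
      rw [e0, e1]; ring
    have p1 : x 0 0 * x 1 0 ≤ 0 := h0 0 0
    have p2 : x 0 1 * x 1 1 ≤ 0 := h0 0 1
    have p3 : (0:ℝ) ≤ x 1 0 * x 2 0 := h12 0 1 (by norm_num) 0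
    have p4 : (0:ℝ) ≤ x 1 1 * x 2 1 := h12 0 1 (by norm_num) 1
    funext j
    fin_cases i <;> fin_cases j
    · show x 0 0 * x 1 0 = 0; linarith
    · show x 0 1 * x 1 1 = 0; linarith
    · show x 1 0 * x 2 0 = 0; linarith
    · show x 1 1 * x 2 1 = 0; linarith
  · intro h
    have hrep : IsColRep (n := 2) (k := 2) ![1, !![0, 1; -1, 0], 1] !![1, 1; 0, 0] := by
      intro j
      fin_cases j
      · exact ⟨0, by intro r; fin_cases r <;> simp [Matrix.one_apply]⟩
      · exact ⟨1, by intro r; fin_cases r <;> simp⟩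
    have hdet : (!![1, 1; 0, 0] : Matrix (Fin 2) (Fin 2) ℝ).det = 0 := by
      simp [Matrix.det_fin_two_of]
    rcases h with h | h
    · have := h _ hrep; rw [hdet] at this; exact lt_irrefl _ this
    · have := h _ hrep; rw [hdet] at this; exact lt_irrefl _ this
end

section
/- Let n ≥ 1 and k = 2, and let C = (C_0, C_1, C_2) = (I, 0, 0), where I is the n×n identity matrix and 0 the n×n zero matrix. Then C has the column W_0-property but C does not have the cS-W property. -/
open Matrix Finset

/-- for `n ≥ 1` and `k = 2`, the tuple `C = (I, 0, 0)` has the column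
`W₀`-property but not the cS-`W` property. -/
theorem columnW0_not_csW_example {n : ℕ} (hn : 1 ≤ n) :
    HasColumnW0 (n := n) (k := 2) ![1, 0, 0] ∧
    ¬ HasCSW (n := n) (k := 2) ![1, 0, 0] := by
  constructor
  · left
    refine ⟨?_, 1, ?_, by simp⟩
    · intro R hR
      by_cases h : ∀ j r, R r j = (1 : Matrix (Fin n) (Fin n) ℝ) r j
      · have hR1 : R = 1 := by ext r j; exact h j r
        simp [hR1]
      · push_neg at h
        obtain ⟨j, r0, hj⟩ := h
        obtain ⟨i, hi⟩ := hR j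
        have hcol : ∀ r, R r j = 0 := by
          fin_cases i
          · exact absurd (hi r0) hj
          · intro r; simpa using hi r
          · intro r; simpa using hi r
        have := Matrix.det_eq_zero_of_column_eq_zero j hcol
        simp [this]
    · intro j
      exact ⟨0, fun r => by simp⟩
  · intro h
    have key := h ![(0 : Fin n → ℝ), 1, 1] ?_ ?_ ?_ 1
    · have h2 : (1 : Fin n → ℝ) = 0 := by
        have : ((1 : Fin 2).castSucc : Fin 3) = 1 := rfl
        have : ((1 : Fin 2).succ : Fin 3) = 2 := rfl
        simpa using key
      have := congrFun h2 ⟨0, hn⟩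
      norm_num at this
    · show (1 : Matrix (Fin n) (Fin n) ℝ) *ᵥ 0 = _
      rw [Fin.sum_univ_two]
      show _ = (0 : Matrix (Fin n) (Fin n) ℝ) *ᵥ 1 + (0 : Matrix (Fin n) (Fin n) ℝ) *ᵥ 1
      simp
    · intro i
      fin_cases i <;> simp [Pi.le_def]
    · intro i j hij
      fin_cases i <;> fin_cases j <;> simp_all [Pi.le_def]
end

section
/- Let C = (C_0, C_1, ..., C_k) be a tuple of real n×n matrices with C_0 invertible and such that C_0^{-1} C_i is a Z-matrix for every 1 ≤ i ≤ k. Then C has the cS-W property if and only if C has the cone cS-W property. -/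
open Matrix Finset

/-- if `C_0` is invertible and every `C_0⁻¹ C_i` (`1 ≤ i ≤ k`) is a
`Z`-matrix, then `C` has the cS-`W` property iff `C` has the cone cS-`W` property. -/
theorem csW_iff_coneCSW_of_Zmatrices {n k : ℕ}
    (C : Fin (k+1) → Matrix (Fin n) (Fin n) ℝ) (h0 : IsUnit (C 0))
    (hZ : ∀ i : Fin k, ∀ r s : Fin n, r ≠ s → ((C 0)⁻¹ * C i.succ) r s ≤ 0) :
    HasCSW C ↔ HasConeCSW C := by
  constructor
  · -- cS-W implies cone cS-W: nonnegative vectors have pairwise nonneg products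
    intro h x heq hnn hle i
    exact h x heq hle (fun i j _ r => mul_nonneg (hnn i r) (hnn j r)) i
  · intro h x heq hle hge
    have hdet : IsUnit (C 0).det := (Matrix.isUnit_iff_isUnit_det _).mp h0
    -- pairwise sign agreement for all pairs
    have hpair : ∀ i j : Fin k, ∀ r, 0 ≤ x i.succ r * x j.succ r := by
      intro i j r
      rcases lt_trichotomy i j with hij | hij | hij
      · exact hge i j hij r
      · subst hij; exact mul_self_nonneg _
      · rw [mul_comm]; exact hge j i hij r
    -- the common sign vector
    set s : Fin n → ℝ := fun r => if ∀ j : Fin k, 0 ≤ x j.succ r then 1 else -1 with hs_def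
    have hs1 : ∀ r, s r = 1 ∨ s r = -1 := by
      intro r; by_cases hc : ∀ j : Fin k, 0 ≤ x j.succ r
      · left; simp [hs_def, hc]
      · right; simp [hs_def, hc]
    have hssq : ∀ r, s r * s r = 1 := by
      intro r; rcases hs1 r with hh | hh <;> rw [hh] <;> ring
    have hsx : ∀ j : Fin k, ∀ r, 0 ≤ s r * x j.succ r := by
      intro j r
      by_cases hc : ∀ j : Fin k, 0 ≤ x j.succ r
      · simp only [hs_def, if_pos hc, one_mul]; exact hc j
      · simp only [hs_def, if_neg hc]
        push_neg at hc
        obtain ⟨j0, hj0⟩ := hc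
        have := hpair j j0 r
        nlinarith
    -- sr x ≤ |x| = st x pointwise bound
    have hsle : ∀ j : Fin k, ∀ r t : Fin n, s r * x j.succ t ≤ s t * x j.succ t := by
      intro j r t
      have h1 := hsx j t
      rcases hs1 r with hr | hr <;> rcases hs1 t with ht | ht <;>
        rw [hr, ht] <;> rw [ht] at h1 <;> nlinarith
    -- rewrite the equation via A i := (C 0)⁻¹ * C i.succ
    set A : Fin k → Matrix (Fin n) (Fin n) ℝ := fun i => (C 0)⁻¹ * C i.succ with hA_def
    have hmvs : ∀ (M : Matrix (Fin n) (Fin n) ℝ) (g : Fin k → Fin n → ℝ),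
        M *ᵥ (∑ i : Fin k, g i) = ∑ i : Fin k, M *ᵥ g i :=
      fun M g => map_sum (Matrix.mulVecLin M) _ _
    have hx0 : x 0 = ∑ i : Fin k, A i *ᵥ x i.succ := by
      have := congrArg (fun v => (C 0)⁻¹ *ᵥ v) heq
      simp only [Matrix.mulVec_mulVec, Matrix.nonsing_inv_mul _ hdet,
        Matrix.one_mulVec, hmvs] at this
      simpa [hA_def, Matrix.mulVec_mulVec] using this
    -- the new tuple
    set y : Fin k → Fin n → ℝ := fun i r => s r * x i.succ r with hy_def
    set a : Fin n → ℝ := ∑ i : Fin k, A i *ᵥ y i with ha_def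
    set x' : Fin (k+1) → Fin n → ℝ := Fin.cons a y with hx'_def
    have hx'0 : x' 0 = a := by
      rw [hx'_def]; exact Fin.cons_zero (α := fun _ : Fin (k+1) => Fin n → ℝ) a y
    have hx's : ∀ i : Fin k, x' i.succ = y i := fun i => by
      rw [hx'_def]; exact Fin.cons_succ (α := fun _ : Fin (k+1) => Fin n → ℝ) a y i
    -- key inequality : a r ≤ s r * x 0 r
    have hkey : ∀ r, a r ≤ s r * x 0 r := by
      intro r
      have har : a r = ∑ i : Fin k, ∑ t : Fin n, A i r t * (s t * x i.succ t) := by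
        simp [ha_def, Finset.sum_apply, Matrix.mulVec, dotProduct, hy_def]
      have hx0r : s r * x 0 r = ∑ i : Fin k, ∑ t : Fin n, s r * (A i r t * x i.succ t) := by
        rw [hx0]
        simp [Finset.sum_apply, Matrix.mulVec, dotProduct, Finset.mul_sum]
      rw [har, hx0r]
      refine Finset.sum_le_sum fun i _ => Finset.sum_le_sum fun t _ => ?_
      by_cases hrt : t = r
      · subst hrt; exact le_of_eq (by ring)
      · have hA := hZ i r t (Ne.symm hrt)
        calc A i r t * (s t * x i.succ t)
            ≤ A i r t * (s r * x i.succ t) :=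
              mul_le_mul_of_nonpos_left (hsle i r t) hA
          _ = s r * (A i r t * x i.succ t) := by ring
    -- the new tuple satisfies the equation
    have heq' : C 0 *ᵥ x' 0 = ∑ i : Fin k, C i.succ *ᵥ x' i.succ := by
      rw [hx'0, ha_def, hmvs]
      refine Finset.sum_congr rfl fun i _ => ?_
      rw [hx's i, Matrix.mulVec_mulVec, hA_def, ← Matrix.mul_assoc,
        Matrix.mul_nonsing_inv _ hdet, Matrix.one_mul]
    have hnn' : ∀ i : Fin k, 0 ≤ x' i.succ := by
      intro i; rw [hx's i]; intro r; exact hsx i r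
    have hle' : ∀ i : Fin k, x' 0 * x' i.succ ≤ 0 := by
      intro i
      rw [hx'0, hx's i]
      intro r
      have h1 := hkey r
      have h2 : x 0 r * x i.succ r ≤ 0 := hle i r
      have h3 := hsx i r
      have h4 : (s r * x 0 r) * (s r * x i.succ r) = x 0 r * x i.succ r := by
        rcases hs1 r with hh | hh <;> rw [hh] <;> ring
      simp only [Pi.mul_apply, Pi.zero_apply, hy_def]
      nlinarith [mul_le_mul_of_nonneg_right h1 h3]
    have hconc := h x' heq' hnn' hle'
    intro i
    funext r
    have hc := congrFun (hconc i) r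
    by_cases hi : i.castSucc = (0 : Fin (k+1))
    · -- first pair
      rw [hi] at hc ⊢
      rw [hx'0, hx's i] at hc
      have hc' : a r * (s r * x i.succ r) = 0 := hc
      have h2 : x 0 r * x i.succ r ≤ 0 := hle i r
      show x 0 r * x i.succ r = (0 : Fin n → ℝ) r
      rw [Pi.zero_apply]
      by_contra hne
      have hlt : x 0 r * x i.succ r < 0 := lt_of_le_of_ne h2 hne
      have hxne : x i.succ r ≠ 0 := fun hz => by rw [hz] at hlt; simp at hlt
      have hz : 0 < s r * x i.succ r := by
        rcases (hsx i r).lt_or_eq with hh | hh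
        · exact hh
        · exfalso
          have hx0' : x i.succ r = 0 := by
            rcases hs1 r with h' | h' <;> rw [h'] at hh <;> linarith
          exact hxne hx0'
      have ha0 : a r = 0 := by
        rcases mul_eq_zero.mp hc' with hh | hh
        · exact hh
        · exact absurd hh hz.ne'
      have h4 : (s r * x 0 r) * (s r * x i.succ r) = x 0 r * x i.succ r := by
        rcases hs1 r with hh | hh <;> rw [hh] <;> ring
      have := hkey r
      nlinarith
    · -- later pairs
      obtain ⟨j, hj⟩ := Fin.exists_succ_eq.mpr hi
      rw [← hj] at hc
      rw [hx's j, hx's i] at hc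
      have hc' : (s r * x j.succ r) * (s r * x i.succ r) = 0 := hc
      have hjx : x j.succ = x i.castSucc := by rw [hj]
      show x i.castSucc r * x i.succ r = (0 : Fin n → ℝ) r
      rw [Pi.zero_apply, ← hjx]
      have : x j.succ r * x i.succ r = (s r * x j.succ r) * (s r * x i.succ r) := by
        rcases hs1 r with hh | hh <;> rw [hh] <;> ring
      rw [this, hc']
end
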